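/- arXiv:1503.06033 — 6 statements merged into one kernel-verified Lean document; each statement's English description precedes it below -/
import Mathlib

section
/- Let τ be the cardinality of the quotient group D*/O*, where D* is the unit group of D and O* is the (image in D* of the) unit group of O. Then: (i) if fD is a prime ideal of D (f inert), then τ divides f + 1; (ii) if fD = P·P' for two distinct prime ideals P, P' of D (f split), then τ divides f − 1; (iii) if fD = P² for a prime ideal P of D (f ramified), then τ divides f. -/
set_option synthInstance.maxHeartbeats 1000000
set_option maxHeartbeats 1000000

open NumberField

/-- Units of a monoid are equivalent to the subtype of unit elements. -/
noncomputable def stmt9.unitsEquiv (M : Type*) [Monoid M] : Mˣ ≃ {x : M // IsUnit x} where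
  toFun u := ⟨(u : M), u.isUnit⟩
  invFun x := x.2.unit
  left_inv u := Units.ext (u.isUnit.unit_spec)
  right_inv x := Subtype.ext (x.2.unit_spec)

lemma stmt9.norm_intCast (K : Type*) [Field K] [NumberField K] (hK : Module.finrank ℚ K = 2)
    (x : ℤ) : Algebra.norm ℤ ((x : 𝓞 K)) = x ^ 2 := by
  have h1 : ((x : ℤ) : 𝓞 K) = algebraMap ℤ (𝓞 K) x := by simp
  rw [h1, Algebra.norm_algebraMap_of_basis (Module.Free.chooseBasis ℤ (𝓞 K)),
    ← Module.finrank_eq_card_chooseBasisIndex, NumberField.RingOfIntegers.rank, hK]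

lemma stmt9.charP (K : Type*) [Field K] [NumberField K] (hK : Module.finrank ℚ K = 2)
    (f : ℕ) (hf : f.Prime) : CharP (𝓞 K ⧸ Ideal.span {(f : 𝓞 K)}) f := by
  constructor
  intro a
  have h1 : ((a : ℕ) : 𝓞 K ⧸ Ideal.span {(f : 𝓞 K)}) =
      Ideal.Quotient.mk _ ((a : ℕ) : 𝓞 K) := by rfl
  rw [h1, Ideal.Quotient.eq_zero_iff_mem, Ideal.mem_span_singleton]
  constructor
  · intro hdvd
    have hnorm : ((f : ℤ) ^ 2) ∣ ((a : ℤ) ^ 2) := by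
      have := map_dvd (Algebra.norm ℤ) hdvd
      rwa [show ((f : ℕ) : 𝓞 K) = ((f : ℤ) : 𝓞 K) by push_cast; rfl,
        show ((a : ℕ) : 𝓞 K) = ((a : ℤ) : 𝓞 K) by push_cast; rfl,
        stmt9.norm_intCast K hK, stmt9.norm_intCast K hK] at this
    have hp : Prime (f : ℤ) := Nat.prime_iff_prime_int.mp hf
    have : (f : ℤ) ∣ (a : ℤ) ^ 2 := dvd_trans (dvd_pow_self _ two_ne_zero) hnorm
    exact_mod_cast hp.dvd_of_dvd_pow this
  · intro hdvd
    exact_mod_cast Nat.cast_dvd_cast (α := 𝓞 K) hdvd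

lemma stmt9.absNorm_span (K : Type*) [Field K] [NumberField K] (hK : Module.finrank ℚ K = 2)
    (f : ℕ) : Ideal.absNorm (Ideal.span {(f : 𝓞 K)}) = f ^ 2 := by
  rw [Ideal.absNorm_span_singleton,
    show ((f : ℕ) : 𝓞 K) = ((f : ℤ) : 𝓞 K) by push_cast; rfl, stmt9.norm_intCast K hK]
  simp [Int.natAbs_pow]

lemma stmt9.card_quot (K : Type*) [Field K] [NumberField K] (hK : Module.finrank ℚ K = 2)
    (f : ℕ) : Nat.card (𝓞 K ⧸ Ideal.span {(f : 𝓞 K)}) = f ^ 2 := by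
  rw [← Submodule.cardQuot_apply, ← Ideal.absNorm_apply, stmt9.absNorm_span K hK]

lemma stmt9.span_ne_bot (K : Type*) [Field K] [NumberField K]
    (f : ℕ) (hf : f.Prime) : Ideal.span {(f : 𝓞 K)} ≠ ⊥ := by
  rw [Ne, Ideal.span_singleton_eq_bot]
  exact Nat.cast_ne_zero.mpr hf.ne_zero

lemma stmt9.main (K : Type*) [Field K] [NumberField K] (hK : Module.finrank ℚ K = 2)
    (f : ℕ) (hf : f.Prime)
    (O : Subring (𝓞 K))
    (hO : ∀ x : 𝓞 K, x ∈ O ↔ ∃ n : ℤ, x - (n : 𝓞 K) ∈ Ideal.span {(f : 𝓞 K)}) :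
    ∃ v : ℕ, Nat.card ((𝓞 K)ˣ ⧸ (Units.map O.subtype.toMonoidHom).range) ∣ v ∧
      v * (f - 1) = Nat.card (𝓞 K ⧸ Ideal.span {(f : 𝓞 K)})ˣ := by
  haveI := stmt9.charP K hK f hf
  haveI : NeZero f := ⟨hf.pos.ne'⟩
  set I := Ideal.span {(f : 𝓞 K)} with hI
  set j : ZMod f →+* 𝓞 K ⧸ I := ZMod.castHom (dvd_refl f) (𝓞 K ⧸ I) with hj
  set H : Subgroup (𝓞 K ⧸ I)ˣ := (Units.map j.toMonoidHom).range with hH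
  set ψ : (𝓞 K)ˣ →* ((𝓞 K ⧸ I)ˣ ⧸ H) :=
    (QuotientGroup.mk' H).comp (Units.map (Ideal.Quotient.mk I).toMonoidHom) with hψ
  have hker : ψ.ker = (Units.map O.subtype.toMonoidHom).range := by
    ext u
    have hmem : u ∈ ψ.ker ↔
        (Units.map (Ideal.Quotient.mk I).toMonoidHom u) ∈ H := by
      rw [MonoidHom.mem_ker, hψ, MonoidHom.comp_apply, QuotientGroup.mk'_apply,
        QuotientGroup.eq_one_iff]
    rw [hmem]
    constructor
    · rintro ⟨a, ha⟩
      have ha' : Units.map j.toMonoidHom a⁻¹ =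
          Units.map (Ideal.Quotient.mk I).toMonoidHom u⁻¹ := by
        rw [map_inv, map_inv, ha]
      obtain ⟨n, hn⟩ := ZMod.intCast_surjective ((a : (ZMod f)ˣ) : ZMod f)
      obtain ⟨m, hm⟩ := ZMod.intCast_surjective ((a⁻¹ : (ZMod f)ˣ) : ZMod f)
      have key : ∀ (x : 𝓞 K) (c : ZMod f) (k : ℤ),
          Ideal.Quotient.mk I x = j c → ((k : ZMod f) = c) → x ∈ O := by
        intro x c k h1 h2
        rw [hO]
        refine ⟨k, ?_⟩
        rw [← Ideal.Quotient.eq, h1, ← h2, hj, map_intCast, map_intCast]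
      have h1 : ((u : (𝓞 K)ˣ) : 𝓞 K) ∈ O := by
        refine key _ _ n ?_ hn
        have := congrArg Units.val ha
        simpa using this.symm
      have h2 : ((u⁻¹ : (𝓞 K)ˣ) : 𝓞 K) ∈ O := by
        refine key _ _ m ?_ hm
        have := congrArg Units.val ha'
        simpa using this.symm
      refine ⟨⟨⟨(u : 𝓞 K), h1⟩, ⟨((u⁻¹ : (𝓞 K)ˣ) : 𝓞 K), h2⟩,
        Subtype.ext (by simp), Subtype.ext (by simp)⟩, Units.ext rfl⟩
    · rintro ⟨w, rfl⟩
      obtain ⟨n, hn⟩ := (hO _).mp ((w : O)).2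
      obtain ⟨m, hm⟩ := (hO _).mp (((w⁻¹ : Oˣ) : O)).2
      have e1 : Ideal.Quotient.mk I (((w : O)) : 𝓞 K) = ((n : ℤ) : 𝓞 K ⧸ I) := by
        rw [show ((n : ℤ) : 𝓞 K ⧸ I) = Ideal.Quotient.mk I ((n : ℤ) : 𝓞 K) by
          rw [map_intCast], Ideal.Quotient.eq]
        exact hn
      have e2 : Ideal.Quotient.mk I ((((w⁻¹ : Oˣ) : O)) : 𝓞 K) = ((m : ℤ) : 𝓞 K ⧸ I) := by
        rw [show ((m : ℤ) : 𝓞 K ⧸ I) = Ideal.Quotient.mk I ((m : ℤ) : 𝓞 K) by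
          rw [map_intCast], Ideal.Quotient.eq]
        exact hm
      have hmulO : (((w : O)) : 𝓞 K) * ((((w⁻¹ : Oˣ) : O)) : 𝓞 K) = 1 := by
        exact_mod_cast congrArg Subtype.val w.mul_inv
      have hmul : ((n : ZMod f)) * ((m : ZMod f)) = 1 := by
        apply ZMod.castHom_injective (𝓞 K ⧸ I)
        rw [map_mul, map_one]
        rw [show (ZMod.castHom (dvd_refl f) (𝓞 K ⧸ I)) = j from rfl]
        rw [hj, map_intCast, map_intCast, ← e1, ← e2, ← map_mul, hmulO, map_one]
      refine ⟨Units.mkOfMulEqOne _ _ hmul, ?_⟩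
      apply Units.ext
      show j ((n : ℤ) : ZMod f) = _
      rw [hj, map_intCast, ← e1]
      rfl
  refine ⟨Nat.card ((𝓞 K ⧸ I)ˣ ⧸ H), ?_, ?_⟩
  · rw [← hker]
    exact Subgroup.card_dvd_of_injective (QuotientGroup.kerLift ψ)
      (QuotientGroup.kerLift_injective ψ)
  · have hcardH : Nat.card H = f - 1 := by
      have hinj : Function.Injective (Units.map j.toMonoidHom) :=
        Units.map_injective (ZMod.castHom_injective _)
      rw [Nat.card_congr ((MonoidHom.ofInjective hinj).toEquiv).symm,
        Nat.card_eq_fintype_card, ZMod.card_units_eq_totient, Nat.totient_prime hf]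
    rw [Subgroup.card_eq_card_quotient_mul_card_subgroup H, hcardH]

lemma stmt9.card_inert (K : Type*) [Field K] [NumberField K] (hK : Module.finrank ℚ K = 2)
    (f : ℕ) (hf : f.Prime) (hp : (Ideal.span {(f : 𝓞 K)}).IsPrime) :
    Nat.card (𝓞 K ⧸ Ideal.span {(f : 𝓞 K)})ˣ = f ^ 2 - 1 := by
  haveI := hp
  haveI : (Ideal.span {(f : 𝓞 K)}).IsMaximal := hp.isMaximal (stmt9.span_ne_bot K f hf)
  letI : Field (𝓞 K ⧸ Ideal.span {(f : 𝓞 K)}) := Ideal.Quotient.field _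
  rw [Nat.card_units, stmt9.card_quot K hK]

lemma stmt9.card_split (K : Type*) [Field K] [NumberField K] (hK : Module.finrank ℚ K = 2)
    (f : ℕ) (hf : f.Prime)
    (P P' : Ideal (𝓞 K)) (hP : P.IsPrime) (hP' : P'.IsPrime) (hne : P ≠ P')
    (hsplit : Ideal.span {(f : 𝓞 K)} = P * P') :
    Nat.card (𝓞 K ⧸ Ideal.span {(f : 𝓞 K)})ˣ = (f - 1) * (f - 1) := by
  have hbot := stmt9.span_ne_bot K f hf
  rw [hsplit] at hbot
  have hPbot : P ≠ ⊥ := fun h => hbot (by rw [h, Ideal.bot_mul])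
  have hP'bot : P' ≠ ⊥ := fun h => hbot (by rw [h, Ideal.mul_bot])
  haveI hPmax : P.IsMaximal := hP.isMaximal hPbot
  haveI hP'max : P'.IsMaximal := hP'.isMaximal hP'bot
  have hcop : IsCoprime P P' := Ideal.isCoprime_iff_sup_eq.mpr (hPmax.coprime_of_ne hP'max hne)
  have habs : Ideal.absNorm P * Ideal.absNorm P' = f ^ 2 := by
    rw [← _root_.map_mul, ← hsplit, stmt9.absNorm_span K hK]
  have key : ∀ a b : ℕ, a * b = f ^ 2 → a ≠ 1 → b ≠ 1 → a = f := by
    intro a b hab ha hb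
    have hd : a ∣ f ^ 2 := Dvd.intro _ hab
    obtain ⟨i, hi, rfl⟩ := (Nat.dvd_prime_pow hf).mp hd
    interval_cases i
    · simp at ha
    · simp
    · exfalso
      apply hb
      have := hab
      nth_rewrite 2 [show f ^ 2 = f ^ 2 * 1 by ring] at this
      exact Nat.eq_of_mul_eq_mul_left (pow_pos hf.pos 2) this
  have hPn : Ideal.absNorm P = f := key _ _ habs
    (fun h => hP.ne_top (Ideal.absNorm_eq_one_iff.mp h))
    (fun h => hP'.ne_top (Ideal.absNorm_eq_one_iff.mp h))
  have hP'n : Ideal.absNorm P' = f := key _ _ (by rw [mul_comm]; exact habs)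
    (fun h => hP'.ne_top (Ideal.absNorm_eq_one_iff.mp h))
    (fun h => hP.ne_top (Ideal.absNorm_eq_one_iff.mp h))
  have cardP : Nat.card (𝓞 K ⧸ P) = f := by
    rw [← Submodule.cardQuot_apply, ← Ideal.absNorm_apply, hPn]
  have cardP' : Nat.card (𝓞 K ⧸ P') = f := by
    rw [← Submodule.cardQuot_apply, ← Ideal.absNorm_apply, hP'n]
  letI : Field (𝓞 K ⧸ P) := Ideal.Quotient.field _
  letI : Field (𝓞 K ⧸ P') := Ideal.Quotient.field _
  have e : (𝓞 K ⧸ Ideal.span {(f : 𝓞 K)}) ≃+* (𝓞 K ⧸ P) × (𝓞 K ⧸ P') :=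
    (Ideal.quotEquivOfEq hsplit).trans (Ideal.quotientMulEquivQuotientProd P P' hcop)
  rw [Nat.card_congr (Units.mapEquiv e.toMulEquiv).toEquiv,
    Nat.card_congr MulEquiv.prodUnits.toEquiv, Nat.card_prod,
    Nat.card_units, Nat.card_units, cardP, cardP']

lemma stmt9.card_ram (K : Type*) [Field K] [NumberField K] (hK : Module.finrank ℚ K = 2)
    (f : ℕ) (hf : f.Prime)
    (P : Ideal (𝓞 K)) (hP : P.IsPrime)
    (hram : Ideal.span {(f : 𝓞 K)} = P ^ 2) :
    Nat.card (𝓞 K ⧸ Ideal.span {(f : 𝓞 K)})ˣ = f ^ 2 - f := by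
  classical
  have hbot := stmt9.span_ne_bot K f hf
  have hPbot : P ≠ ⊥ := by
    intro h
    exact hbot (by rw [hram, h, pow_two, Ideal.mul_bot])
  haveI hPmax : P.IsMaximal := hP.isMaximal hPbot
  have hPn : Ideal.absNorm P = f := by
    have h2 : Ideal.absNorm P ^ 2 = f ^ 2 := by
      rw [← _root_.map_pow, ← hram, stmt9.absNorm_span K hK]
    exact Nat.pow_left_injective two_ne_zero h2
  have cardP : Nat.card (𝓞 K ⧸ P) = f := by
    rw [← Submodule.cardQuot_apply, ← Ideal.absNorm_apply, hPn]
  set R := 𝓞 K ⧸ Ideal.span {(f : 𝓞 K)} with hR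
  set m : Ideal R := Ideal.map (Ideal.Quotient.mk (Ideal.span {(f : 𝓞 K)})) P with hm
  have hle : Ideal.span {(f : 𝓞 K)} ≤ P := hram ▸ Ideal.pow_le_self two_ne_zero
  have e : (R ⧸ m) ≃+* 𝓞 K ⧸ P := DoubleQuot.quotQuotEquivQuotOfLE hle
  have cardQm : Nat.card (R ⧸ m) = f := by rw [Nat.card_congr e.toEquiv, cardP]
  have cardR : Nat.card R = f ^ 2 := stmt9.card_quot K hK f
  have cardm : Nat.card m = f := by
    have h1 : Nat.card R = Nat.card m * Nat.card (R ⧸ m) :=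
      Submodule.card_eq_card_quotient_mul_card m
    rw [cardR, cardQm] at h1
    have : f * f = Nat.card ↥m * f := by rw [← h1]; ring
    exact (Nat.eq_of_mul_eq_mul_right hf.pos this).symm
  haveI : Nontrivial (𝓞 K ⧸ P) := Ideal.Quotient.nontrivial_iff.mpr hPmax.ne_top
  haveI : Nontrivial (R ⧸ m) := e.toEquiv.nontrivial
  have hm_ne_top : m ≠ ⊤ := by
    intro h
    exact (not_subsingleton (R ⧸ m)) (Ideal.Quotient.subsingleton_iff.mpr h)
  have hunit : ∀ x : R, IsUnit x ↔ x ∉ m := by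
    intro x
    constructor
    · intro h hx
      exact hm_ne_top (Ideal.eq_top_of_isUnit_mem m hx h)
    · intro hx
      by_contra hnu
      apply hx
      have hspan : Ideal.span {x} ≠ ⊤ := fun h => hnu (Ideal.span_singleton_eq_top.mp h)
      obtain ⟨M, hM, hleM⟩ := Ideal.exists_le_maximal _ hspan
      have hxM : x ∈ M := hleM (Ideal.mem_span_singleton_self x)
      have hcomap : Ideal.span {(f : 𝓞 K)} ≤
          Ideal.comap (Ideal.Quotient.mk (Ideal.span {(f : 𝓞 K)})) M := by
        intro y hy
        rw [Ideal.mem_comap, Ideal.Quotient.eq_zero_iff_mem.mpr hy]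
        exact M.zero_mem
      haveI := hM.isPrime
      haveI : (Ideal.comap (Ideal.Quotient.mk (Ideal.span {(f : 𝓞 K)})) M).IsPrime :=
        Ideal.IsPrime.comap _
      have hPle : P ≤ Ideal.comap (Ideal.Quotient.mk (Ideal.span {(f : 𝓞 K)})) M :=
        Ideal.IsPrime.le_of_pow_le (n := 2) (by rw [← hram]; exact hcomap)
      have hPeq : P = Ideal.comap (Ideal.Quotient.mk (Ideal.span {(f : 𝓞 K)})) M :=
        hPmax.eq_of_le (Ideal.IsPrime.ne_top ‹_›) hPle
      have hMeq : m = M := by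
        rw [hm, hPeq, Ideal.map_comap_of_surjective _ Ideal.Quotient.mk_surjective]
      rw [hMeq]
      exact hxM
  letI : Fintype R := @Fintype.ofFinite R (Ideal.finiteQuotientOfFreeOfNeBot _ hbot)
  have h1 : Nat.card Rˣ = Nat.card {x : R // x ∉ m} := by
    rw [Nat.card_congr (stmt9.unitsEquiv R)]
    exact Nat.card_congr (Equiv.subtypeEquiv (Equiv.refl R) (fun x => by simp [hunit x]))
  have hsum : Nat.card {x : R // x ∈ m} + Nat.card {x : R // x ∉ m} = Nat.card R := by
    rw [← Nat.card_sum]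
    exact Nat.card_congr (Equiv.sumCompl _)
  have hmm : Nat.card {x : R // x ∈ m} = f := cardm
  rw [h1]
  omega

theorem stmt_9
    (K : Type*) [Field K] [NumberField K] (hK : Module.finrank ℚ K = 2)
    (f : ℕ) (hf : f.Prime)
    (O : Subring (𝓞 K))
    (hO : ∀ x : 𝓞 K, x ∈ O ↔ ∃ n : ℤ, x - (n : 𝓞 K) ∈ Ideal.span {(f : 𝓞 K)})
    (τ : ℕ)
    (hτ : τ = Nat.card ((𝓞 K)ˣ ⧸ (Units.map O.subtype.toMonoidHom).range)) :
    ((Ideal.span {(f : 𝓞 K)}).IsPrime → τ ∣ f + 1) ∧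
    ((∃ P P' : Ideal (𝓞 K), P.IsPrime ∧ P'.IsPrime ∧ P ≠ P' ∧
        Ideal.span {(f : 𝓞 K)} = P * P') → τ ∣ f - 1) ∧
    ((∃ P : Ideal (𝓞 K), P.IsPrime ∧ Ideal.span {(f : 𝓞 K)} = P ^ 2) → τ ∣ f) := by
  obtain ⟨v, hdvd, hv⟩ := stmt9.main K hK f hf O hO
  rw [← hτ] at hdvd
  have hf2 : 2 ≤ f := hf.two_le
  obtain ⟨g, rfl⟩ : ∃ g, f = g + 2 := ⟨f - 2, by omega⟩
  refine ⟨?_, ?_, ?_⟩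
  · intro hp
    rw [stmt9.card_inert K hK _ hf hp] at hv
    have hv' : v = (g + 2) + 1 := by
      have e1 : (g + 2) ^ 2 = (g + 3) * (g + 1) + 1 := by ring
      have e2 : v * (g + 2 - 1) = v * (g + 1) := by norm_num
      have e4 : v * (g + 1) = (g + 3) * (g + 1) := by omega
      have : v = g + 3 := Nat.eq_of_mul_eq_mul_right (by omega) e4
      omega
    exact hv' ▸ hdvd
  · rintro ⟨P, P', hP, hP', hne, hsplit⟩
    rw [stmt9.card_split K hK _ hf P P' hP hP' hne hsplit] at hv
    have hv' : v = (g + 2) - 1 := by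
      have e2 : v * (g + 2 - 1) = v * (g + 1) := by norm_num
      have e3 : (g + 2 - 1) * (g + 2 - 1) = (g + 1) * (g + 1) := by norm_num
      have e4 : v * (g + 1) = (g + 1) * (g + 1) := by omega
      have : v = g + 1 := Nat.eq_of_mul_eq_mul_right (by omega) e4
      omega
    exact hv' ▸ hdvd
  · rintro ⟨P, hP, hram⟩
    rw [stmt9.card_ram K hK _ hf P hP hram] at hv
    have hv' : v = g + 2 := by
      have e1 : (g + 2) ^ 2 = (g + 2) * (g + 1) + (g + 2) := by ring
      have e2 : v * (g + 2 - 1) = v * (g + 1) := by norm_num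
      have e4 : v * (g + 1) = (g + 2) * (g + 1) := by omega
      exact Nat.eq_of_mul_eq_mul_right (by omega) e4
    exact hv' ▸ hdvd
end

section
/- Let I be an ideal of O with 𝔉² ⊊ I ⊊ 𝔉 and I ≠ DI, and let z ∈ D be such that zD + fD = D (i.e. z is invertible modulo 𝔉). If zI + 𝔉² = I (where zI = {zx : x ∈ I}), then z ∈ O. (This expresses that the group (D/𝔉)*/(O/𝔉)* acts freely on the set of ideals of O lying properly between 𝔉 and 𝔉² that are not D-modules.) -/
set_option synthInstance.maxHeartbeats 1000000
set_option maxHeartbeats 1000000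

open NumberField

lemma key_count {Q : Type*} [AddCommGroup Q] {f : ℕ} (hf : f.Prime)
    (hQ : Nat.card Q = f ^ 2) (a : Q) (ha : a ≠ 0) (hfa : f • a = 0)
    (B : AddSubgroup Q) (haB : a ∈ B) (hB : ¬ B ≤ AddSubgroup.zmultiples a) :
    B = ⊤ := by
  have hfin : Finite Q := Nat.finite_of_card_ne_zero (by rw [hQ]; exact pow_ne_zero 2 hf.ne_zero)
  have horder : addOrderOf a = f := by
    have h1 : addOrderOf a ∣ f := addOrderOf_dvd_of_nsmul_eq_zero hfa
    rcases hf.eq_one_or_self_of_dvd _ h1 with h | h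
    · exact absurd (AddMonoid.addOrderOf_eq_one_iff.mp h) ha
    · exact h
  have hA : Nat.card (AddSubgroup.zmultiples a) = f := by
    rw [Nat.card_zmultiples, horder]
  have hle : AddSubgroup.zmultiples a ≤ B := AddSubgroup.zmultiples_le.mpr haB
  have hd1 : f ∣ Nat.card B := hA ▸ AddSubgroup.card_dvd_of_le hle
  have hd2 : Nat.card B ∣ f ^ 2 := hQ ▸ AddSubgroup.card_addSubgroup_dvd_card B
  obtain ⟨k, hk⟩ := hd1
  have hkf : k ∣ f := by
    have := hd2
    rw [hk, pow_two] at this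
    exact (mul_dvd_mul_iff_left (by exact_mod_cast hf.ne_zero : (f:ℕ) ≠ 0)).mp this
  rcases hf.eq_one_or_self_of_dvd _ hkf with h | h
  · exfalso
    apply hB
    have hcards : Nat.card B ≤ Nat.card (AddSubgroup.zmultiples a) := by
      rw [hA, hk, h, mul_one]
    have := AddSubgroup.eq_of_le_of_card_ge hle hcards
    rw [this]
  · have : Nat.card B = Nat.card Q := by rw [hQ, hk, h, pow_two]
    exact AddSubgroup.eq_top_of_card_eq _ this

theorem stmt_10
    (K : Type*) [Field K] [NumberField K] (hK : Module.finrank ℚ K = 2)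
    (f : ℕ) (hf : f.Prime)
    (O : Subring (𝓞 K))
    (hO : ∀ x : 𝓞 K, x ∈ O ↔ ∃ n : ℤ, x - (n : 𝓞 K) ∈ Ideal.span {(f : 𝓞 K)})
    (F : Ideal O) (hF : ∀ x : O, x ∈ F ↔ (x : 𝓞 K) ∈ Ideal.span {(f : 𝓞 K)})
    (I : Ideal O) (hI1 : F ^ 2 < I) (hI2 : I < F)
    (hND : ¬ ∀ z : 𝓞 K, ∀ x ∈ I, ∃ w ∈ I, (w : 𝓞 K) = z * (x : 𝓞 K))
    (z : 𝓞 K) (hz : Ideal.span {z} + Ideal.span {(f : 𝓞 K)} = ⊤)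
    (hzI : ∀ y : O, y ∈ I ↔
      ∃ x ∈ I, ∃ g ∈ F ^ 2, (y : 𝓞 K) = z * (x : 𝓞 K) + (g : 𝓞 K)) :
    z ∈ O := by
  classical
  have hf0 : (f : 𝓞 K) ≠ 0 := by
    exact_mod_cast (Nat.cast_ne_zero (R := 𝓞 K)).mpr hf.ne_zero
  -- membership in O for multiples of f
  have hmulO : ∀ d : 𝓞 K, (f : 𝓞 K) * d ∈ O := fun d =>
    (hO _).mpr ⟨0, by simpa using Ideal.mem_span_singleton.mpr ⟨d, rfl⟩⟩
  have hfO : (f : 𝓞 K) ∈ O := by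
    have := hmulO 1
    simpa using this
  -- characterize F^2
  have hF2 : ∀ x : O, x ∈ F ^ 2 ↔ (f : 𝓞 K) ^ 2 ∣ (x : 𝓞 K) := by
    intro x
    constructor
    · intro hx
      have hle : F ^ 2 ≤ Ideal.comap O.subtype (Ideal.span {((f : 𝓞 K)) ^ 2}) := by
        rw [pow_two]
        apply Ideal.mul_le.mpr
        intro a haF b hbF
        obtain ⟨a', ha'⟩ := Ideal.mem_span_singleton.mp ((hF a).mp haF)
        obtain ⟨b', hb'⟩ := Ideal.mem_span_singleton.mp ((hF b).mp hbF)
        apply Ideal.mem_comap.mpr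
        apply Ideal.mem_span_singleton.mpr
        exact ⟨a' * b', by show ((a * b : O) : 𝓞 K) = _; push_cast [ha', hb']; ring⟩
      exact Ideal.mem_span_singleton.mp (hle hx)
    · rintro ⟨d, hd⟩
      have h2 : (f : 𝓞 K) * d ∈ O := hmulO d
      have hx : x = (⟨(f : 𝓞 K), hfO⟩ : O) * ⟨(f : 𝓞 K) * d, h2⟩ := by
        apply Subtype.ext
        push_cast
        rw [hd]; ring
      rw [pow_two, hx]
      exact Ideal.mul_mem_mul
        ((hF _).mpr (Ideal.mem_span_singleton.mpr ⟨1, (mul_one _).symm⟩))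
        ((hF _).mpr (Ideal.mem_span_singleton.mpr ⟨d, rfl⟩))
  -- the quotient D/fD and its cardinality
  set 𝔭 : Ideal (𝓞 K) := Ideal.span {(f : 𝓞 K)} with h𝔭
  let π : 𝓞 K →+* (𝓞 K) ⧸ 𝔭 := Ideal.Quotient.mk 𝔭
  have hcard : Nat.card ((𝓞 K) ⧸ 𝔭) = f ^ 2 := by
    have h1 : Nat.card ((𝓞 K) ⧸ 𝔭) = Ideal.absNorm 𝔭 := by
      rw [Ideal.absNorm_apply, Submodule.cardQuot_apply]
    have h2 : (f : 𝓞 K) = algebraMap ℤ (𝓞 K) (f : ℤ) := by simp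
    have b := Module.Free.chooseBasis ℤ (𝓞 K)
    have h3 : Algebra.norm ℤ (algebraMap ℤ (𝓞 K) (f : ℤ)) = (f : ℤ) ^ 2 := by
      rw [Algebra.norm_algebraMap_of_basis b]
      congr 1
      rw [← Module.finrank_eq_card_basis b, NumberField.RingOfIntegers.rank, hK]
    rw [h1, h𝔭, Ideal.absNorm_span_singleton, h2, h3]
    simp [Int.natAbs_pow]
  -- pick x0 ∈ I \ F², write x0 = f * a0
  obtain ⟨x0, hx0I, hx0F2⟩ := SetLike.exists_of_lt hI1
  obtain ⟨a0, ha0⟩ := Ideal.mem_span_singleton.mp ((hF x0).mp (hI2.le hx0I))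
  have ha0f : ¬ (f : 𝓞 K) ∣ a0 := by
    rintro ⟨t, ht⟩
    exact hx0F2 ((hF2 x0).mpr ⟨t, by rw [ha0, ht]; ring⟩)
  have hπa0 : π a0 ≠ 0 := fun h =>
    ha0f (Ideal.mem_span_singleton.mp (by rw [← h𝔭]; exact Ideal.Quotient.eq_zero_iff_mem.mp h))
  have hfπa0 : f • π a0 = 0 := by
    have h0 : π ((f : 𝓞 K) * a0) = 0 := Ideal.Quotient.eq_zero_iff_mem.mpr
      (by rw [h𝔭]; exact Ideal.mem_span_singleton.mpr ⟨a0, rfl⟩)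
    rw [map_mul, map_natCast] at h0
    rw [nsmul_eq_mul]
    exact_mod_cast h0
  -- the subgroup S = {d | f*d ∈ I}
  set S : AddSubgroup (𝓞 K) :=
    { carrier := {d | ∃ w ∈ I, (w : 𝓞 K) = (f : 𝓞 K) * d}
      add_mem' := by
        rintro d e ⟨w, hw, hwd⟩ ⟨v, hv, hve⟩
        exact ⟨w + v, add_mem hw hv, by push_cast [hwd, hve]; ring⟩
      zero_mem' := ⟨0, zero_mem _, by simp⟩
      neg_mem' := by
        rintro d ⟨w, hw, hwd⟩
        exact ⟨-w, neg_mem hw, by push_cast [hwd]; ring⟩ } with hS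
  have ha0S : a0 ∈ S := ⟨x0, hx0I, ha0⟩
  -- Step 1: I/F² is the line through x0
  have hline : ∀ w : O, w ∈ I → ∃ n : ℤ, (f : 𝓞 K) ^ 2 ∣ ((w : 𝓞 K) - (n : 𝓞 K) * (x0 : 𝓞 K)) := by
    by_contra hcon
    push_neg at hcon
    obtain ⟨w, hwI, hw⟩ := hcon
    obtain ⟨b0, hb0⟩ := Ideal.mem_span_singleton.mp ((hF w).mp (hI2.le hwI))
    set B : AddSubgroup ((𝓞 K) ⧸ 𝔭) := AddSubgroup.map π.toAddMonoidHom S with hB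
    have haB : π a0 ∈ B := ⟨a0, ha0S, rfl⟩
    have hnotle : ¬ B ≤ AddSubgroup.zmultiples (π a0) := by
      intro hle
      have hb0B : π b0 ∈ B := ⟨b0, ⟨w, hwI, hb0⟩, rfl⟩
      obtain ⟨n, hn⟩ := AddSubgroup.mem_zmultiples_iff.mp (hle hb0B)
      have : π (b0 - n • a0) = 0 := by
        rw [map_sub, map_zsmul, hn, sub_self]
      obtain ⟨t, ht⟩ := Ideal.mem_span_singleton.mp
        (by rw [← h𝔭]; exact Ideal.Quotient.eq_zero_iff_mem.mp this)
      apply hw n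
      refine ⟨t, ?_⟩
      have : b0 - (n : 𝓞 K) * a0 = (f : 𝓞 K) * t := by rw [← ht]; rw [zsmul_eq_mul]
      rw [hb0, ha0, pow_two]
      linear_combination (f : 𝓞 K) * this
    have htop := key_count hf hcard (π a0) hπa0 hfπa0 B haB hnotle
    -- deduce F ≤ I
    have hFI : F ≤ I := by
      intro v hvF
      obtain ⟨c0, hc0⟩ := Ideal.mem_span_singleton.mp ((hF v).mp hvF)
      have hc0B : π c0 ∈ B := by rw [htop]; trivial
      obtain ⟨s, hsS, hs⟩ := hc0B
      obtain ⟨w', hw'I, hw's⟩ := hsS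
      obtain ⟨t, ht⟩ : (f : 𝓞 K) ∣ (c0 - s) := by
        rw [← Ideal.mem_span_singleton, ← h𝔭]
        apply Ideal.Quotient.eq_zero_iff_mem.mp
        have hs' : π s = π c0 := hs
        rw [map_sub, hs', sub_self]
      have hg2 : v - w' ∈ F ^ 2 := by
        apply (hF2 _).mpr
        refine ⟨t, ?_⟩
        push_cast
        rw [hc0, hw's, pow_two]
        linear_combination (f : 𝓞 K) * ht
      have : v - w' ∈ I := hI1.le hg2
      simpa using add_mem hw'I this
    exact hI2.not_ge hFI
  -- Step 2: z * x0 ∈ I mod F²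
  have hyO : z * (x0 : 𝓞 K) ∈ O := by
    have := hmulO (z * a0)
    rw [ha0]
    convert this using 1
    ring
  have hyI : (⟨z * (x0 : 𝓞 K), hyO⟩ : O) ∈ I :=
    (hzI _).mpr ⟨x0, hx0I, 0, zero_mem _, by push_cast; ring⟩
  obtain ⟨c, hc⟩ := hline _ hyI
  obtain ⟨u, hu⟩ := hc
  have hdiv : (f : 𝓞 K) ∣ (z - (c : 𝓞 K)) * a0 := by
    refine ⟨u, ?_⟩
    apply mul_left_cancel₀ hf0
    have hu' : z * ((x0 : 𝓞 K)) - (c : 𝓞 K) * (x0 : 𝓞 K) = (f : 𝓞 K) ^ 2 * u := by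
      simpa using hu
    rw [ha0] at hu'
    linear_combination hu'
  obtain ⟨u', hu'⟩ := hdiv
  -- Step 4: a0 is invertible mod f
  by_cases hinv : Ideal.span {a0} + 𝔭 = ⊤
  · -- a0 invertible: conclude
    have h1 : (1 : 𝓞 K) ∈ Ideal.span {a0} + 𝔭 := by rw [hinv]; trivial
    obtain ⟨p, hp, q, hq, hpq⟩ := Submodule.mem_sup.mp h1
    obtain ⟨e, he⟩ := Ideal.mem_span_singleton.mp hp
    obtain ⟨t, ht⟩ := Ideal.mem_span_singleton.mp hq
    apply (hO z).mpr
    refine ⟨c, Ideal.mem_span_singleton.mpr ⟨e * u' + (z - (c : 𝓞 K)) * t, ?_⟩⟩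
    have hone : a0 * e + (f : 𝓞 K) * t = 1 := by rw [← he, ← ht]; exact hpq
    linear_combination e * hu' - (z - (c : 𝓞 K)) * hone
  · exfalso
    set J : Ideal (𝓞 K) := Ideal.span {a0} + 𝔭 with hJ
    have ha0J : a0 ∈ J := Ideal.mem_sup_left (Ideal.subset_span rfl)
    set B4 : AddSubgroup ((𝓞 K) ⧸ 𝔭) := AddSubgroup.map π.toAddMonoidHom J.toAddSubgroup with hB4
    have haB4 : π a0 ∈ B4 := ⟨a0, ha0J, rfl⟩
    by_cases hB4le : B4 ≤ AddSubgroup.zmultiples (π a0)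
    · -- I is a D-module: contradiction with hND
      apply hND
      intro ζ x hxI
      obtain ⟨n, hn⟩ := hline x hxI
      obtain ⟨v, hv⟩ := hn
      have hζa0 : π (ζ * a0) ∈ B4 := ⟨ζ * a0, J.mul_mem_left ζ ha0J, rfl⟩
      obtain ⟨m, hm⟩ := AddSubgroup.mem_zmultiples_iff.mp (hB4le hζa0)
      obtain ⟨r, hr⟩ : (f : 𝓞 K) ∣ (ζ * a0 - (m : 𝓞 K) * a0) := by
        rw [← Ideal.mem_span_singleton, ← h𝔭]
        apply Ideal.Quotient.eq_zero_iff_mem.mp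
        rw [map_sub, ← hm, zsmul_eq_mul, map_mul, map_intCast, sub_self]
      -- g := ζ*x - (m*n)*x0 is divisible by f²
      have hgO : ζ * (x : 𝓞 K) - ((m * n : ℤ) : 𝓞 K) * (x0 : 𝓞 K) ∈ O := by
        obtain ⟨bx, hbx⟩ := Ideal.mem_span_singleton.mp ((hF x).mp (hI2.le hxI))
        have := hmulO (ζ * bx - ((m * n : ℤ) : 𝓞 K) * a0)
        convert this using 1
        rw [hbx, ha0]; ring
      have hgF2 : (⟨_, hgO⟩ : O) ∈ F ^ 2 := by
        apply (hF2 _).mpr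
        refine ⟨ζ * v + (n : 𝓞 K) * r, ?_⟩
        show ζ * (x : 𝓞 K) - ((m * n : ℤ) : 𝓞 K) * (x0 : 𝓞 K) = _
        have h1 : (x : 𝓞 K) - (n : 𝓞 K) * (x0 : 𝓞 K) = (f : 𝓞 K) ^ 2 * v := hv
        have h2 : ζ * a0 - (m : 𝓞 K) * a0 = (f : 𝓞 K) * r := hr
        push_cast
        rw [ha0] at h1 ⊢
        linear_combination ζ * h1 + (n : 𝓞 K) * (f : 𝓞 K) * h2
      refine ⟨(m * n) • x0 + ⟨_, hgO⟩, add_mem (zsmul_mem hx0I _) (hI1.le hgF2), ?_⟩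
      push_cast [zsmul_eq_mul]
      ring
    · have htop := key_count hf hcard (π a0) hπa0 hfπa0 B4 haB4 hB4le
      apply hinv
      refine (Ideal.eq_top_iff_one J).mpr ?_
      have h1B : π 1 ∈ B4 := by rw [htop]; trivial
      obtain ⟨j, hjJ, hj⟩ := h1B
      obtain ⟨s, hs⟩ : (f : 𝓞 K) ∣ (1 - j) := by
        rw [← Ideal.mem_span_singleton, ← h𝔭]
        apply Ideal.Quotient.eq_zero_iff_mem.mp
        have hj' : π j = π 1 := hj
        rw [map_sub, hj', sub_self]
      have : (1 : 𝓞 K) = j + (f : 𝓞 K) * s := by rw [← hs]; ring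
      rw [this]
      exact add_mem hjJ (Ideal.mem_sup_right (by rw [h𝔭]; exact Ideal.mem_span_singleton.mpr ⟨s, rfl⟩))
end

section
/- Suppose 𝔉 = fD is a prime ideal of D (f inert in D), and let ω ∈ D be such that D = ℤ[ω]. Then every 𝔉-basic ideal Q of O contains 𝔉², and Q equals one of the following pairwise distinct ideals: 𝔉, the principal ideal fO (which equals fO + f²ω·O), or f²·O + f(a + ω)·O for some a with 0 ≤ a ≤ f − 1. -/
set_option synthInstance.maxHeartbeats 1000000
set_option maxHeartbeats 1000000

open NumberField

/-- `Q` is an `F`-primary ideal of a commutative ring. -/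
def IsFPrimary {R : Type*} [CommRing R] (F Q : Ideal R) : Prop :=
  Q.IsPrimary ∧ Q.radical = F

/-- `Q` is an `F`-basic ideal: an `F`-primary ideal not contained in `F ^ 2`. -/
def IsFBasic {R : Type*} [CommRing R] (F Q : Ideal R) : Prop :=
  IsFPrimary F Q ∧ ¬ Q ≤ F ^ 2

theorem stmt_11
    (K : Type*) [Field K] [NumberField K] (hK : Module.finrank ℚ K = 2)
    (f : ℕ) (hf : f.Prime)
    (O : Subring (𝓞 K))
    (hO : ∀ x : 𝓞 K, x ∈ O ↔ ∃ n : ℤ, x - (n : 𝓞 K) ∈ Ideal.span {(f : 𝓞 K)})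
    (F : Ideal O) (hF : ∀ x : O, x ∈ F ↔ (x : 𝓞 K) ∈ Ideal.span {(f : 𝓞 K)})
    (hinert : (Ideal.span {(f : 𝓞 K)}).IsPrime)
    (ω : 𝓞 K) (hω : Algebra.adjoin ℤ {ω} = ⊤)
    (T : ℕ → O) (hT : ∀ a : ℕ, (T a : 𝓞 K) = (f : 𝓞 K) * ((a : 𝓞 K) + ω))
    (w2 : O) (hw2 : (w2 : 𝓞 K) = (f : 𝓞 K) ^ 2 * ω)
    (Qa : ℕ → Ideal O) (hQa : ∀ a : ℕ, Qa a = Ideal.span {(f : O) ^ 2, T a}) :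
    (∀ Q : Ideal O, IsFBasic F Q →
      F ^ 2 ≤ Q ∧ (Q = F ∨ Q = Ideal.span {(f : O)} ∨ ∃ a < f, Q = Qa a)) ∧
    Ideal.span {(f : O)} = Ideal.span {(f : O), w2} ∧
    F ≠ Ideal.span {(f : O)} ∧
    (∀ a < f, F ≠ Qa a ∧ Ideal.span {(f : O)} ≠ Qa a) ∧
    (∀ a < f, ∀ b < f, a ≠ b → Qa a ≠ Qa b) := by
  classical
  have hf0 : (f : 𝓞 K) ≠ 0 := Nat.cast_ne_zero.mpr hf.ne_zero
  have hfZ : (f : ℤ) ≠ 0 := by exact_mod_cast hf.ne_zero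
  have hfP : Prime (f : ℤ) := Nat.prime_iff_prime_int.mp hf
  -- Step A : quadratic relation for ω
  obtain ⟨s, t, hst⟩ : ∃ s t : ℤ, ω ^ 2 = (t : 𝓞 K) + (s : 𝓞 K) * ω := by
    have hint : IsIntegral ℤ ω := IsIntegral.of_finite ℤ ω
    have hmonic : (minpoly ℤ ω).Monic := minpoly.monic hint
    have hdeg : (minpoly ℤ ω).natDegree ≤ 2 := by
      have h1 : minpoly ℚ (algebraMap (𝓞 K) K ω) = (minpoly ℤ ω).map (algebraMap ℤ ℚ) :=
        minpoly.isIntegrallyClosed_eq_field_fractions ℚ K hint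
      have h2 : (minpoly ℚ (algebraMap (𝓞 K) K ω)).natDegree ≤ 2 := by
        rw [← hK]; exact minpoly.natDegree_le _
      rwa [h1, hmonic.natDegree_map] at h2
    set r := (Polynomial.X ^ 2 : Polynomial ℤ) %ₘ minpoly ℤ ω with hr
    have hrd : r.degree ≤ 1 := by
      have h5 := Polynomial.degree_modByMonic_lt (Polynomial.X ^ 2 : Polynomial ℤ) hmonic
      have h3 : (minpoly ℤ ω).degree ≤ 2 := Polynomial.degree_le_of_natDegree_le hdeg
      have h4 : r.degree < 2 := lt_of_lt_of_le h5 h3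
      exact Order.le_of_lt_succ (by exact_mod_cast h4)
    have hev : ω ^ 2 = Polynomial.aeval ω r := by
      conv_lhs => rw [show (ω ^ 2 : 𝓞 K) = Polynomial.aeval ω (Polynomial.X ^ 2 : Polynomial ℤ) by simp]
      conv_lhs => rw [← Polynomial.modByMonic_add_div (Polynomial.X ^ 2 : Polynomial ℤ) (minpoly ℤ ω)]
      rw [map_add, map_mul, minpoly.aeval, zero_mul, add_zero]
    refine ⟨r.coeff 1, r.coeff 0, ?_⟩
    rw [hev]
    conv_lhs => rw [Polynomial.eq_X_add_C_of_degree_le_one hrd]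
    simp only [map_add, map_mul, Polynomial.aeval_C, Polynomial.aeval_X, eq_intCast, map_intCast]
    ring
  -- Step B : 1, ω span
  have hB : ∀ x : 𝓞 K, ∃ m n : ℤ, x = (m : 𝓞 K) + (n : 𝓞 K) * ω := by
    intro x
    let S : Subalgebra ℤ (𝓞 K) :=
    { carrier := {x | ∃ m n : ℤ, x = (m : 𝓞 K) + (n : 𝓞 K) * ω}
      mul_mem' := by
        rintro a b ⟨m, n, rfl⟩ ⟨m', n', rfl⟩
        exact ⟨m * m' + n * n' * t, m * n' + m' * n + n * n' * s, by
          push_cast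
          linear_combination (n : 𝓞 K) * (n' : 𝓞 K) * hst⟩
      add_mem' := by
        rintro a b ⟨m, n, rfl⟩ ⟨m', n', rfl⟩
        exact ⟨m + m', n + n', by push_cast; ring⟩
      algebraMap_mem' := fun c => ⟨c, 0, by push_cast; simp⟩ }
    have hx : x ∈ S := by
      have h1 : Algebra.adjoin ℤ {ω} ≤ S := Algebra.adjoin_le (by
        intro y hy; rcases hy with rfl; exact ⟨0, 1, by push_cast; ring⟩)
      exact h1 (hω ▸ Algebra.mem_top : x ∈ Algebra.adjoin ℤ {ω})
    exact hx
  -- Step C : 1, ω independent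
  have hC : ∀ m n : ℤ, (m : 𝓞 K) + (n : 𝓞 K) * ω = 0 → m = 0 ∧ n = 0 := by
    intro m n h
    by_cases hn : n = 0
    · subst hn
      simp only [Int.cast_zero, zero_mul, add_zero] at h
      exact ⟨by exact_mod_cast h, rfl⟩
    · exfalso
      have key : ∀ x : 𝓞 K, n • x ∈ Submodule.span ℤ {(1 : 𝓞 K)} := by
        intro x
        obtain ⟨a, b, rfl⟩ := hB x
        have h2 : n • ((a : 𝓞 K) + (b : 𝓞 K) * ω) = (n * a - b * m : ℤ) • (1 : 𝓞 K) := by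
          push_cast [zsmul_eq_mul]
          linear_combination (b : 𝓞 K) * h
        rw [h2]
        exact Submodule.smul_mem _ _ (Submodule.mem_span_singleton_self _)
      let L : 𝓞 K →ₗ[ℤ] Submodule.span ℤ {(1 : 𝓞 K)} :=
      { toFun := fun x => ⟨n • x, key x⟩
        map_add' := by intro x y; ext; simp [smul_add]
        map_smul' := by intro c x; ext; simp [zsmul_eq_mul]; ring }
      have hinj : Function.Injective L := by
        intro x y hxy
        have h3 : n • x = n • y := congrArg Subtype.val hxy
        exact smul_right_injective (𝓞 K) hn h3
      have h1 : Module.finrank ℤ (Submodule.span ℤ {(1 : 𝓞 K)}) ≤ 1 := by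
        simpa using finrank_span_le_card ({(1 : 𝓞 K)} : Set (𝓞 K))
      have h2 : Module.finrank ℤ (𝓞 K) = 2 := by rw [RingOfIntegers.rank, hK]
      have h3 := LinearMap.finrank_le_finrank_of_injective hinj
      omega
  have uniq : ∀ m n m' n' : ℤ, (m : 𝓞 K) + (n : 𝓞 K) * ω = (m' : 𝓞 K) + (n' : 𝓞 K) * ω →
      m = m' ∧ n = n' := by
    intro m n m' n' h
    have h1 : ((m - m' : ℤ) : 𝓞 K) + ((n - n' : ℤ) : 𝓞 K) * ω = 0 := by
      push_cast; linear_combination h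
    obtain ⟨e1, e2⟩ := hC _ _ h1
    omega
  have funiq : ∀ m n m' n' : ℤ,
      (f : 𝓞 K) * m + (f : 𝓞 K) * n * ω = (f : 𝓞 K) * m' + (f : 𝓞 K) * n' * ω →
      m = m' ∧ n = n' := by
    intro m n m' n' h
    have h1 : ((f * m : ℤ) : 𝓞 K) + ((f * n : ℤ) : 𝓞 K) * ω
        = ((f * m' : ℤ) : 𝓞 K) + ((f * n' : ℤ) : 𝓞 K) * ω := by push_cast; linear_combination h
    obtain ⟨e1, e2⟩ := uniq _ _ _ _ h1
    constructor
    · exact mul_left_cancel₀ hfZ e1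
    · exact mul_left_cancel₀ hfZ e2
  -- membership in O and F
  have hmemO : ∀ z : 𝓞 K, (∃ m n : ℤ, z = (m : 𝓞 K) + (f : 𝓞 K) * n * ω) → z ∈ O := by
    rintro z ⟨m, n, rfl⟩
    refine (hO _).mpr ⟨m, Ideal.mem_span_singleton.mpr ⟨(n : 𝓞 K) * ω, by push_cast; ring⟩⟩
  have memO : ∀ z : 𝓞 K, z ∈ O → ∃ m n : ℤ, z = (m : 𝓞 K) + (f : 𝓞 K) * n * ω := by
    intro z hz
    obtain ⟨c, hc⟩ := (hO z).mp hz
    obtain ⟨d, hd⟩ := Ideal.mem_span_singleton.mp hc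
    obtain ⟨a, b, rfl⟩ := hB d
    exact ⟨c + f * a, b, by push_cast; linear_combination hd⟩
  have memF : ∀ x : O, x ∈ F ↔ ∃ m n : ℤ, (x : 𝓞 K) = (f : 𝓞 K) * m + (f : 𝓞 K) * n * ω := by
    intro x
    constructor
    · intro hx
      obtain ⟨d, hd⟩ := Ideal.mem_span_singleton.mp ((hF x).mp hx)
      obtain ⟨a, b, rfl⟩ := hB d
      exact ⟨a, b, by push_cast; linear_combination hd⟩
    · rintro ⟨m, n, hx⟩
      exact (hF x).mpr (Ideal.mem_span_singleton.mpr ⟨(m : 𝓞 K) + n * ω, by push_cast; linear_combination hx⟩)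
  -- fω as element of O
  set fω : O := ⟨(f : 𝓞 K) * ω, hmemO _ ⟨0, 1, by push_cast; ring⟩⟩ with hfω
  have hfωc : (fω : 𝓞 K) = (f : 𝓞 K) * ω := rfl
  have hfc : ((f : O) : 𝓞 K) = (f : 𝓞 K) := by push_cast; ring
  have hintc : ∀ c : ℤ, ((c : O) : 𝓞 K) = (c : 𝓞 K) := by intro c; push_cast; ring
  -- membership in span {f}
  have memfO : ∀ x : O, x ∈ Ideal.span {(f : O)} ↔
      ∃ m n : ℤ, (x : 𝓞 K) = (f : 𝓞 K) * m + (f : 𝓞 K) * n * ω ∧ (f : ℤ) ∣ n := by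
    intro x
    constructor
    · intro hx
      obtain ⟨y, hy⟩ := Ideal.mem_span_singleton.mp hx
      obtain ⟨a, b, hab⟩ := memO y y.2
      refine ⟨a, f * b, ?_, ⟨b, rfl⟩⟩
      have h1 : (x : 𝓞 K) = (f : 𝓞 K) * (y : 𝓞 K) := by
        rw [hy]; push_cast; ring
      rw [h1, hab]; push_cast; ring
    · rintro ⟨m, n, hx, b, rfl⟩
      refine Ideal.mem_span_singleton.mpr ⟨⟨(m : 𝓞 K) + (f : 𝓞 K) * b * ω, hmemO _ ⟨m, b, rfl⟩⟩, ?_⟩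
      apply Subtype.ext
      push_cast
      rw [hx]; push_cast; ring
  -- F^2 = span {f^2, w2}
  have hfF : (f : O) ∈ F := (memF _).mpr ⟨1, 0, by rw [hfc]; push_cast; ring⟩
  have hfωF : fω ∈ F := (memF _).mpr ⟨0, 1, by rw [hfωc]; push_cast; ring⟩
  have hw2f : w2 = (f : O) * fω := by
    apply Subtype.ext
    push_cast [hw2, hfωc, hfc]
    ring
  have hF2span : F ^ 2 = Ideal.span {(f : O) ^ 2, w2} := by
    apply le_antisymm
    · rw [pow_two]
      refine Ideal.mul_le.mpr ?_
      intro r hr z hz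
      obtain ⟨m, n, hrc⟩ := (memF r).mp hr
      obtain ⟨m', n', hzc⟩ := (memF z).mp hz
      refine Ideal.mem_span_pair.mpr
        ⟨((m * m' + n * n' * t : ℤ) : O), ((m * n' + m' * n + n * n' * s : ℤ) : O), ?_⟩
      apply Subtype.ext
      push_cast [hintc, hfc, hw2]
      rw [hrc, hzc]
      push_cast
      linear_combination (-((f : 𝓞 K) ^ 2 * (n : 𝓞 K) * (n' : 𝓞 K))) * hst
    · refine Ideal.span_le.mpr ?_
      rintro z hz
      rcases hz with rfl | hz
      · exact Ideal.pow_mem_pow hfF 2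
      · rcases hz with rfl
        rw [hw2f, pow_two]
        exact Ideal.mul_mem_mul hfF hfωF
  have memF2 : ∀ x : O, x ∈ F ^ 2 ↔
      ∃ m n : ℤ, (x : 𝓞 K) = (f : 𝓞 K) * m + (f : 𝓞 K) * n * ω ∧ (f : ℤ) ∣ m ∧ (f : ℤ) ∣ n := by
    intro x
    rw [hF2span]
    constructor
    · intro hx
      obtain ⟨u, v, huv⟩ := Ideal.mem_span_pair.mp hx
      obtain ⟨c, d, hu⟩ := memO u u.2
      obtain ⟨e, g, hv⟩ := memO v v.2
      have hcoe : (u : 𝓞 K) * (f : 𝓞 K) ^ 2 + (v : 𝓞 K) * ((f : 𝓞 K) ^ 2 * ω) = (x : 𝓞 K) := by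
        rw [← hw2]
        calc (u : 𝓞 K) * (f : 𝓞 K) ^ 2 + (v : 𝓞 K) * (w2 : 𝓞 K)
            = ((u * (f : O) ^ 2 + v * w2 : O) : 𝓞 K) := by push_cast [hfc]; ring
          _ = (x : 𝓞 K) := by rw [huv]
      refine ⟨f * (c + f * g * t), f * (f * d + e + f * g * s), ?_, ⟨_, rfl⟩, ⟨_, rfl⟩⟩
      rw [hu, hv] at hcoe
      push_cast
      linear_combination (-1 : 𝓞 K) * hcoe + ((f : 𝓞 K) ^ 3 * (g : 𝓞 K)) * hst
    · rintro ⟨m, n, hx, ⟨m2, rfl⟩, ⟨n2, rfl⟩⟩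
      refine Ideal.mem_span_pair.mpr ⟨(m2 : O), (n2 : O), ?_⟩
      apply Subtype.ext
      push_cast [hintc, hfc, hw2]
      rw [hx]
      push_cast
      ring
  -- membership in Qa a
  have memQa : ∀ (a : ℕ) (x : O), x ∈ Qa a ↔
      ∃ m n : ℤ, (x : 𝓞 K) = (f : 𝓞 K) * m + (f : 𝓞 K) * n * ω ∧ (f : ℤ) ∣ (m - a * n) := by
    intro a x
    rw [hQa]
    constructor
    · intro hx
      obtain ⟨u, v, huv⟩ := Ideal.mem_span_pair.mp hx
      obtain ⟨c, d, hu⟩ := memO u u.2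
      obtain ⟨e, g, hv⟩ := memO v v.2
      have hcoe : (u : 𝓞 K) * (f : 𝓞 K) ^ 2 + (v : 𝓞 K) * ((f : 𝓞 K) * ((a : 𝓞 K) + ω)) = (x : 𝓞 K) := by
        rw [← hT]
        calc (u : 𝓞 K) * (f : 𝓞 K) ^ 2 + (v : 𝓞 K) * ((T a : O) : 𝓞 K)
            = ((u * (f : O) ^ 2 + v * T a : O) : 𝓞 K) := by push_cast [hfc]; ring
          _ = (x : 𝓞 K) := by rw [huv]
      refine ⟨f * c + a * e + f * g * t, f * f * d + e + f * g * a + f * g * s, ?_,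
        ⟨c + g * t - a * f * d - g * a * a - g * a * s, by ring⟩⟩
      rw [hu, hv] at hcoe
      push_cast
      linear_combination (-1 : 𝓞 K) * hcoe + ((f : 𝓞 K) ^ 2 * (g : 𝓞 K)) * hst
    · rintro ⟨m, n, hx, A, hA⟩
      refine Ideal.mem_span_pair.mpr ⟨(A : O), (n : O), ?_⟩
      apply Subtype.ext
      push_cast [hintc, hfc, hT]
      rw [hx]
      have hm : (m : ℤ) = a * n + f * A := by omega
      rw [hm]
      push_cast
      ring
  have bez : ∀ d : ℤ, ¬ (f : ℤ) ∣ d → ∃ e k : ℤ, e * d = 1 + f * k := by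
    intro d hd
    obtain ⟨a, b, hab⟩ := hfP.irreducible.coprime_iff_not_dvd.mpr hd
    exact ⟨b, -a, by linarith⟩
  have main : ∀ Q : Ideal O, IsFBasic F Q →
      F ^ 2 ≤ Q ∧ (Q = F ∨ Q = Ideal.span {(f : O)} ∨ ∃ a < f, Q = Qa a) := by
    intro Q hQ
    obtain ⟨⟨hQprim, hQrad⟩, hQnb⟩ := hQ
    have hQF : Q ≤ F := hQrad ▸ Ideal.le_radical
    obtain ⟨q, hqQ, hqF2⟩ := SetLike.not_le_iff_exists.mp hQnb
    obtain ⟨m₀, n₀, hq⟩ := (memF q).mp (hQF hqQ)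
    have notboth : ¬ ((f : ℤ) ∣ m₀ ∧ (f : ℤ) ∣ n₀) := by
      rintro ⟨h1, h2⟩
      exact hqF2 ((memF2 q).mpr ⟨m₀, n₀, hq, h1, h2⟩)
    have huD : ((m₀ : 𝓞 K) + (n₀ : 𝓞 K) * ω) ∉ Ideal.span {(f : 𝓞 K)} := by
      intro hu
      obtain ⟨d, hd⟩ := Ideal.mem_span_singleton.mp hu
      obtain ⟨a, b, rfl⟩ := hB d
      have h2 : (m₀ : 𝓞 K) + (n₀ : 𝓞 K) * ω = ((f * a : ℤ) : 𝓞 K) + ((f * b : ℤ) : 𝓞 K) * ω := by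
        rw [hd]; push_cast; ring
      obtain ⟨e1, e2⟩ := uniq _ _ _ _ h2
      exact notboth ⟨⟨a, e1⟩, ⟨b, e2⟩⟩
    have hmax : (Ideal.span {(f : 𝓞 K)}).IsMaximal :=
      Ideal.IsPrime.isMaximal hinert (by simpa [Ideal.span_singleton_eq_bot] using hf0)
    obtain ⟨v, i, hiI, hvi⟩ := hmax.exists_inv huD
    obtain ⟨d, hd⟩ := Ideal.mem_span_singleton.mp hiI
    have hyO : v * ((m₀ : 𝓞 K) + (n₀ : 𝓞 K) * ω) ∈ O := by
      refine (hO _).mpr ⟨1, Ideal.mem_span_singleton.mpr ⟨-d, ?_⟩⟩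
      push_cast
      linear_combination hvi - hd
    set y : O := ⟨v * ((m₀ : 𝓞 K) + (n₀ : 𝓞 K) * ω), hyO⟩ with hy
    have hyF : y ∉ F := by
      intro hyF
      have h1 : v * ((m₀ : 𝓞 K) + (n₀ : 𝓞 K) * ω) ∈ Ideal.span {(f : 𝓞 K)} := (hF y).mp hyF
      have h2 : (1 : 𝓞 K) ∈ Ideal.span {(f : 𝓞 K)} := by
        rw [← hvi]; exact Ideal.add_mem _ h1 hiI
      exact hinert.ne_top (Ideal.eq_top_iff_one _ |>.mpr h2)
    have hyrad : y ∉ Q.radical := by rw [hQrad]; exact hyF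
    have hwO : (f : 𝓞 K) * v ∈ O :=
      (hO _).mpr ⟨0, by rw [Int.cast_zero, sub_zero]; exact Ideal.mem_span_singleton.mpr ⟨v, rfl⟩⟩
    have key1 : q * ⟨(f : 𝓞 K) * v, hwO⟩ = (f : O) ^ 2 * y := by
      apply Subtype.ext
      push_cast [hy, hfc]
      rw [hq]
      ring
    have hf2Q : (f : O) ^ 2 ∈ Q := by
      have h1 : (f : O) ^ 2 * y ∈ Q := key1 ▸ Ideal.mul_mem_right _ _ hqQ
      exact ((Ideal.isPrimary_iff.mp hQprim).2 h1).resolve_right hyrad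
    have hw'O : (f : 𝓞 K) * (ω * v) ∈ O :=
      (hO _).mpr ⟨0, by rw [Int.cast_zero, sub_zero]; exact Ideal.mem_span_singleton.mpr ⟨ω * v, rfl⟩⟩
    have key2 : q * ⟨(f : 𝓞 K) * (ω * v), hw'O⟩ = w2 * y := by
      apply Subtype.ext
      push_cast [hy, hw2]
      rw [hq]
      ring
    have hw2Q : w2 ∈ Q := by
      have h1 : w2 * y ∈ Q := key2 ▸ Ideal.mul_mem_right _ _ hqQ
      exact ((Ideal.isPrimary_iff.mp hQprim).2 h1).resolve_right hyrad
    have hF2Q : F ^ 2 ≤ Q := by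
      rw [hF2span]
      refine Ideal.span_le.mpr ?_
      rintro z (rfl | hz)
      · exact hf2Q
      · rcases hz with rfl
        exact hw2Q
    refine ⟨hF2Q, ?_⟩
    by_cases hind : ∃ x ∈ Q, ∃ m n : ℤ,
        (x : 𝓞 K) = (f : 𝓞 K) * m + (f : 𝓞 K) * n * ω ∧ ¬ (f : ℤ) ∣ (m₀ * n - n₀ * m)
    · -- two independent vectors: Q = F
      left
      refine le_antisymm hQF ?_
      intro z hzF
      obtain ⟨x, hxQ, m₁, n₁, hx, hdet⟩ := hind
      obtain ⟨m, n, hz⟩ := (memF z).mp hzF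
      obtain ⟨e, k, hek⟩ := bez _ hdet
      obtain ⟨c1, hc1⟩ : ∃ c1 : ℤ, c1 = e * (m * n₁ - m₁ * n) := ⟨_, rfl⟩
      obtain ⟨c2, hc2⟩ : ∃ c2 : ℤ, c2 = e * (m₀ * n - m * n₀) := ⟨_, rfl⟩
      have hekc : (e : 𝓞 K) * ((m₀ : 𝓞 K) * n₁ - (n₀ : 𝓞 K) * m₁) = 1 + (f : 𝓞 K) * k := by
        exact_mod_cast hek
      have hres : z - (c1 : O) * q - (c2 : O) * x ∈ F ^ 2 := by
        refine (memF2 _).mpr ⟨-(f * (k * m)), -(f * (k * n)), ?_, ⟨-(k * m), by ring⟩,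
          ⟨-(k * n), by ring⟩⟩
        have hc1c : (c1 : 𝓞 K) = (e : 𝓞 K) * ((m : 𝓞 K) * n₁ - (m₁ : 𝓞 K) * n) := by
          exact_mod_cast hc1
        have hc2c : (c2 : 𝓞 K) = (e : 𝓞 K) * ((m₀ : 𝓞 K) * n - (m : 𝓞 K) * n₀) := by
          exact_mod_cast hc2
        push_cast [hintc]
        rw [hq, hx, hz]
        push_cast
        linear_combination (-(f : 𝓞 K) * m - (f : 𝓞 K) * n * ω) * hekc
          + (-(f : 𝓞 K) * m₀ - (f : 𝓞 K) * n₀ * ω) * hc1c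
          + (-(f : 𝓞 K) * m₁ - (f : 𝓞 K) * n₁ * ω) * hc2c
      have hzeq : z = (c1 : O) * q + (c2 : O) * x + (z - (c1 : O) * q - (c2 : O) * x) := by ring
      rw [hzeq]
      exact Ideal.add_mem _ (Ideal.add_mem _ (Ideal.mul_mem_left _ _ hqQ)
        (Ideal.mul_mem_left _ _ hxQ)) (hF2Q hres)
    · push_neg at hind
      by_cases hn₀ : (f : ℤ) ∣ n₀
      · -- Q = span {f}
        have hm₀ : ¬ (f : ℤ) ∣ m₀ := fun h => notboth ⟨h, hn₀⟩
        right; left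
        apply le_antisymm
        · intro x hxQ
          obtain ⟨m, n, hx⟩ := (memF x).mp (hQF hxQ)
          have hdvd := hind x hxQ m n hx
          have hfn : (f : ℤ) ∣ n := by
            have h2 : (f : ℤ) ∣ m₀ * n := by
              obtain ⟨c, hc⟩ := hn₀
              obtain ⟨c2, hc2⟩ := hdvd
              exact ⟨c2 + c * m, by linear_combination hc2 + m * hc⟩
            exact (hfP.dvd_mul.mp h2).resolve_left hm₀
          exact (memfO x).mpr ⟨m, n, hx, hfn⟩
        · rw [Ideal.span_le, Set.singleton_subset_iff]
          obtain ⟨e, k, hek⟩ := bez _ hm₀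
          obtain ⟨n₀', hn₀'⟩ := hn₀
          have hekc : (e : 𝓞 K) * (m₀ : 𝓞 K) = 1 + (f : 𝓞 K) * k := by exact_mod_cast hek
          have hn₀'c : (n₀ : 𝓞 K) = (f : 𝓞 K) * n₀' := by exact_mod_cast hn₀'
          have hres : (f : O) - (e : O) * q ∈ F ^ 2 := by
            refine (memF2 _).mpr ⟨-(f * k), -(f * (e * n₀')), ?_, ⟨-k, by ring⟩,
              ⟨-(e * n₀'), by ring⟩⟩
            push_cast [hintc, hfc]
            rw [hq]
            push_cast
            linear_combination (-(f : 𝓞 K)) * hekc - (f : 𝓞 K) * (e : 𝓞 K) * ω * hn₀'c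
          have heq : (f : O) = (e : O) * q + ((f : O) - (e : O) * q) := by ring
          rw [heq]
          exact Ideal.add_mem _ (Ideal.mul_mem_left _ _ hqQ) (hF2Q hres)
      · -- Q = Qa a
        right; right
        obtain ⟨e, k, hek⟩ := bez _ hn₀
        set a : ℕ := ((e * m₀) % f).toNat with ha
        have haz : (a : ℤ) = (e * m₀) % f := Int.toNat_of_nonneg (Int.emod_nonneg _ hfZ)
        have hfpos : (0 : ℤ) < f := by positivity
        have haf : a < f := by
          have h5 := Int.emod_lt_of_pos (e * m₀) hfpos
          omega
        have h1 : (f : ℤ) ∣ (e * m₀ - a) := by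
          refine ⟨(e * m₀) / f, ?_⟩
          rw [haz, Int.emod_def]
          ring
        obtain ⟨c1, hc1⟩ := h1
        have hdiv : (f : ℤ) ∣ (m₀ - a * n₀) :=
          ⟨c1 * n₀ - k * m₀, by linear_combination n₀ * hc1 - m₀ * hek⟩
        refine ⟨a, haf, le_antisymm ?_ ?_⟩
        · intro x hxQ
          obtain ⟨m, n, hx⟩ := (memF x).mp (hQF hxQ)
          have hdvd := hind x hxQ m n hx
          have h2 : (f : ℤ) ∣ n₀ * (m - a * n) := by
            obtain ⟨d1, hd1⟩ := hdvd
            obtain ⟨d2, hd2⟩ := hdiv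
            exact ⟨-d1 + n * d2, by linear_combination -hd1 + n * hd2⟩
          have h3 := (hfP.dvd_mul.mp h2).resolve_left hn₀
          exact (memQa a x).mpr ⟨m, n, hx, h3⟩
        · rw [hQa]
          refine Ideal.span_le.mpr ?_
          rintro z (rfl | hz)
          · exact hf2Q
          · rcases hz with rfl
            have hekc : (e : 𝓞 K) * (n₀ : 𝓞 K) = 1 + (f : 𝓞 K) * k := by exact_mod_cast hek
            have hc1c : (e : 𝓞 K) * (m₀ : 𝓞 K) - (a : 𝓞 K) = (f : 𝓞 K) * c1 := by
              exact_mod_cast hc1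
            have hres : T a - (e : O) * q ∈ F ^ 2 := by
              refine (memF2 _).mpr ⟨-(f * c1), -(f * k), ?_, ⟨-c1, by ring⟩, ⟨-k, by ring⟩⟩
              push_cast [hintc, hT]
              rw [hq]
              push_cast
              linear_combination (-(f : 𝓞 K)) * hc1c - (f : 𝓞 K) * ω * hekc
            have heq : T a = (e : O) * q + (T a - (e : O) * q) := by ring
            rw [heq]
            exact Ideal.add_mem _ (Ideal.mul_mem_left _ _ hqQ) (hF2Q hres)
  have hf2le : (2 : ℤ) ≤ f := by exact_mod_cast hf.two_le
  have hfnotQa : ∀ a : ℕ, (f : O) ∉ Qa a := by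
    intro a hmem
    obtain ⟨m, n, hc, hdvd⟩ := (memQa a _).mp hmem
    have h2 : (f : 𝓞 K) * ((1 : ℤ) : 𝓞 K) + (f : 𝓞 K) * ((0 : ℤ) : 𝓞 K) * ω
        = (f : 𝓞 K) * m + (f : 𝓞 K) * n * ω := by rw [← hc, hfc]; push_cast; ring
    obtain ⟨e1, e2⟩ := funiq _ _ _ _ h2
    rw [← e1, ← e2] at hdvd
    simp only [mul_zero, sub_zero] at hdvd
    have := Int.le_of_dvd one_pos hdvd
    omega
  refine ⟨main, ?_, ?_, ?_, ?_⟩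
  · apply le_antisymm
    · exact Ideal.span_mono (by simp)
    · refine Ideal.span_le.mpr ?_
      rintro z (rfl | hz)
      · exact Ideal.mem_span_singleton_self _
      · rcases hz with rfl
        exact Ideal.mem_span_singleton.mpr ⟨fω, hw2f⟩
  · intro hEq
    have h1 : fω ∈ Ideal.span {(f : O)} := hEq ▸ hfωF
    obtain ⟨m, n, hc, hn⟩ := (memfO _).mp h1
    have h2 : (f : 𝓞 K) * ((0 : ℤ) : 𝓞 K) + (f : 𝓞 K) * ((1 : ℤ) : 𝓞 K) * ω
        = (f : 𝓞 K) * m + (f : 𝓞 K) * n * ω := by rw [← hc, hfωc]; push_cast; ring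
    obtain ⟨e1, e2⟩ := funiq _ _ _ _ h2
    rw [← e2] at hn
    have := Int.le_of_dvd one_pos hn
    omega
  · intro a _
    constructor
    · intro hEq
      exact hfnotQa a (hEq ▸ hfF)
    · intro hEq
      exact hfnotQa a (hEq ▸ Ideal.mem_span_singleton_self _)
  · intro a haf b hbf hab hEq
    have hTa : T a ∈ Qa a := (memQa a _).mpr ⟨a, 1, by rw [hT]; push_cast; ring, by simp⟩
    have h1 : T a ∈ Qa b := hEq ▸ hTa
    obtain ⟨m, n, hc, hdvd⟩ := (memQa b _).mp h1
    have h2 : (f : 𝓞 K) * ((a : ℤ) : 𝓞 K) + (f : 𝓞 K) * ((1 : ℤ) : 𝓞 K) * ω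
        = (f : 𝓞 K) * m + (f : 𝓞 K) * n * ω := by rw [← hc, hT]; push_cast; ring
    obtain ⟨e1, e2⟩ := funiq _ _ _ _ h2
    rw [← e1, ← e2] at hdvd
    have h3 : (f : ℤ) ∣ ((a : ℤ) - b) := by simpa using hdvd
    have hne : (a : ℤ) - b ≠ 0 := by
      intro h0
      exact hab (by omega)
    have habs : |(a : ℤ) - b| < f := abs_lt.mpr ⟨by omega, by omega⟩
    have h4 := Int.le_of_dvd (abs_pos.mpr hne) ((dvd_abs _ _).mpr h3)
    linarith
end

section
/- Suppose fD = P·P' for two distinct prime ideals P, P' of D. Let m ≥ 1 and β ∈ D be such that P^m = βD. Then β^n ∉ O for every integer n > 0. -/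
set_option synthInstance.maxHeartbeats 1000000
set_option maxHeartbeats 1000000

open NumberField

theorem stmt_12
    (K : Type*) [Field K] [NumberField K] (hK : Module.finrank ℚ K = 2)
    (f : ℕ) (hf : f.Prime)
    (O : Subring (𝓞 K))
    (hO : ∀ x : 𝓞 K, x ∈ O ↔ ∃ n : ℤ, x - (n : 𝓞 K) ∈ Ideal.span {(f : 𝓞 K)})
    (P P' : Ideal (𝓞 K)) (hP : P.IsPrime) (hP' : P'.IsPrime) (hPP' : P ≠ P')
    (hsplit : Ideal.span {(f : 𝓞 K)} = P * P')
    (m : ℕ) (hm : 1 ≤ m) (β : 𝓞 K) (hβ : P ^ m = Ideal.span {β}) :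
    ∀ n : ℕ, 0 < n → β ^ n ∉ O := by
  intro n hn hmem
  obtain ⟨k, hk⟩ := (hO _).mp hmem
  have hfP : Ideal.span {(f : 𝓞 K)} ≤ P := hsplit ▸ Ideal.mul_le_left
  have hfP' : Ideal.span {(f : 𝓞 K)} ≤ P' := hsplit ▸ Ideal.mul_le_right
  have hfmem : (f : 𝓞 K) ∈ Ideal.span {(f : 𝓞 K)} := Ideal.mem_span_singleton_self _
  -- P is nonzero
  have hPne : P ≠ ⊥ := by
    intro h
    have h0 : (f : 𝓞 K) = 0 := by
      have := hfP hfmem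
      rwa [h, Ideal.mem_bot] at this
    exact (Nat.cast_ne_zero.mpr hf.ne_zero) h0
  -- β ∈ P
  have hβP : β ∈ P := by
    have h1 : β ∈ P ^ m := hβ ▸ Ideal.mem_span_singleton_self β
    exact Ideal.pow_le_self (by omega) h1
  -- β ∉ P'
  have hβP' : β ∉ P' := by
    intro h
    have hle : P ^ m ≤ P' := by
      rw [hβ, Ideal.span_singleton_le_iff_mem]; exact h
    have hle2 : P ≤ P' := hP'.le_of_pow_le hle
    have hmax : P.IsMaximal := Ideal.IsPrime.isMaximal hP hPne
    exact hPP' (hmax.eq_of_le hP'.ne_top hle2)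
  -- k ∈ P
  have hkP : ((k : ℤ) : 𝓞 K) ∈ P := by
    have h1 : β ^ n ∈ P := Ideal.pow_mem_of_mem P hβP n hn
    have h2 : β ^ n - (k : 𝓞 K) ∈ P := hfP hk
    have := P.sub_mem h1 h2
    simpa using this
  -- f ∣ k in ℤ
  have hfk : (f : ℤ) ∣ k := by
    set q := Ideal.comap (algebraMap ℤ (𝓞 K)) P with hq
    have hqprime : q.IsPrime := Ideal.IsPrime.comap _
    have hfq : (f : ℤ) ∈ q := by
      simp only [hq, Ideal.mem_comap]
      simpa using hfP hfmem
    have hmax : (Ideal.span {(f : ℤ)}).IsMaximal :=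
      PrincipalIdealRing.isMaximal_of_irreducible (Nat.prime_iff_prime_int.mp hf).irreducible
    have hle : Ideal.span {(f : ℤ)} ≤ q := by
      rw [Ideal.span_singleton_le_iff_mem]; exact hfq
    have heq : q = Ideal.span {(f : ℤ)} := (hmax.eq_of_le hqprime.ne_top hle).symm
    have hkq : k ∈ q := by
      simp only [hq, Ideal.mem_comap]
      simpa using hkP
    rw [heq, Ideal.mem_span_singleton] at hkq
    exact hkq
  -- hence k ∈ span f in 𝓞 K
  have hkspan : ((k : ℤ) : 𝓞 K) ∈ Ideal.span {(f : 𝓞 K)} := by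
    rw [Ideal.mem_span_singleton]
    obtain ⟨c, hc⟩ := hfk
    exact ⟨(c : 𝓞 K), by push_cast [hc]; ring⟩
  -- β^n ∈ P'
  have hβnP' : β ^ n ∈ P' := by
    have h2 : β ^ n - (k : 𝓞 K) ∈ P' := hfP' hk
    have := P'.add_mem h2 (hfP' hkspan)
    simpa using this
  exact hβP' (hP'.mem_of_pow_mem n hβnP')
end

section
/- An element t ∈ O is 𝔉-basic if and only if there exist n ∈ ℕ and a unit w of D such that t = w·t_n or t = w·σ(t_n). Moreover, for all n, h ≥ 1 and all units w, w' of D: (a) t_n·w·O ⊆ t_h·w'·O implies n = h and w/w' ∈ O; (b) neither of the ideals t_n·w·O and σ(t_h)·w'·O contains the other; (c) 𝔉² ⊄ t_n·w·O. -/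
set_option synthInstance.maxHeartbeats 1000000
set_option maxHeartbeats 1000000

open NumberField

/-- divisor of prime power of a nonunit prime -/
private lemma aux_pow_dvd_pow_iff {M : Type*} [CommMonoidWithZero M] [IsCancelMulZero M]
    {p : M} (hp : Prime p) {a b : ℕ} : p ^ a ∣ p ^ b ↔ a ≤ b :=
  pow_dvd_pow_iff hp.ne_zero hp.not_unit

/-- Kernel-of-conductor lemma: if `x` is congruent to an integer mod `f` and lies in a
prime containing `f`, then `f ∣ x`. -/
private lemma aux_keyO {R : Type*} [CommRing R] (f : ℕ) (hf : f.Prime)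
    (Q : Ideal R) (hQ : Q.IsPrime) (hfQ : (f : R) ∈ Q)
    (x : R) (hxO : ∃ n : ℤ, (f : R) ∣ (x - n)) (hxQ : x ∈ Q) : (f : R) ∣ x := by
  obtain ⟨n, c, hc⟩ := hxO
  have hxn : x - (n : R) ∈ Q := hc ▸ Ideal.mul_mem_right _ _ hfQ
  have hnQ : ((n : ℤ) : R) ∈ Q := by
    have := Q.sub_mem hxQ hxn
    simpa using this
  -- pass to ℤ
  have hfz : Prime (f : ℤ) := Nat.prime_iff_prime_int.mp hf
  have hmax : (Ideal.span {(f : ℤ)}).IsMaximal :=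
    PrincipalIdealRing.isMaximal_of_irreducible hfz.irreducible
  have hcomap : (Ideal.comap (Int.castRingHom R) Q).IsPrime := Ideal.IsPrime.comap _
  have hle : Ideal.span {(f : ℤ)} ≤ Ideal.comap (Int.castRingHom R) Q := by
    rw [Ideal.span_le, Set.singleton_subset_iff]
    simpa using hfQ
  have heq : Ideal.span {(f : ℤ)} = Ideal.comap (Int.castRingHom R) Q :=
    hmax.eq_of_le hcomap.ne_top hle
  have hnmem : (n : ℤ) ∈ Ideal.span {(f : ℤ)} := by
    rw [heq]; simpa using hnQ
  obtain ⟨c', hc'⟩ := Ideal.mem_span_singleton.mp hnmem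
  have : (f : R) ∣ (n : R) := by
    refine ⟨(c' : R), ?_⟩
    have := congrArg (fun z : ℤ => (z : R)) hc'
    push_cast at this
    simpa using this
  have := dvd_add ⟨c, hc⟩ this
  simpa using this

/-- minimality of m: a principal power of P must have exponent divisible by m,
with generator a unit times a power of β. -/
private lemma aux_PL {Dd : Type*} [CommRing Dd] [IsDedekindDomain Dd]
    (P : Ideal Dd) (hPbot : P ≠ ⊥)
    (m : ℕ) (hm1 : 1 ≤ m)
    (hmmin : ∀ j : ℕ, 1 ≤ j → j < m → ¬ (P ^ j).IsPrincipal)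
    (β : Dd) (hβ : P ^ m = Ideal.span {β}) :
    ∀ (i : ℕ) (d : Dd), Ideal.span {d} = P ^ i →
      ∃ (q : ℕ) (e : Ddˣ), i = m * q ∧ d = β ^ q * e := by
  intro i d hd
  have hq : m * (i / m) ≤ i := Nat.mul_div_le i m
  have hdvd : β ^ (i / m) ∣ d := by
    rw [← Ideal.span_singleton_le_span_singleton, hd, ← Ideal.span_singleton_pow, ← hβ,
      ← pow_mul]
    exact Ideal.pow_le_pow_right hq
  obtain ⟨e, he⟩ := hdvd
  have hspan : P ^ (m * (i / m)) * Ideal.span {e} = P ^ i := by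
    rw [pow_mul, hβ, Ideal.span_singleton_pow, Ideal.span_singleton_mul_span_singleton, ← he, hd]
  have hPpowne : P ^ (m * (i / m)) ≠ 0 := pow_ne_zero _ hPbot
  have hspan2 : Ideal.span {e} = P ^ (i % m) := by
    have : P ^ (m * (i / m)) * Ideal.span {e} = P ^ (m * (i / m)) * P ^ (i % m) := by
      rw [hspan, ← pow_add]
      congr 1
      have := Nat.div_add_mod i m
      omega
    exact mul_left_cancel₀ hPpowne this
  have hr0 : i % m = 0 := by
    by_contra hr
    exact hmmin (i % m) (Nat.one_le_iff_ne_zero.mpr hr) (Nat.mod_lt _ (by omega))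
      ⟨⟨e, hspan2.symm⟩⟩
  rw [hr0, pow_zero] at hspan2
  rw [Ideal.one_eq_top] at hspan2
  have hu : IsUnit e := Ideal.span_singleton_eq_top.mp hspan2
  have hi : i = m * (i / m) := by
    have := Nat.div_add_mod i m
    omega
  refine ⟨i / m, hu.unit, hi, by rw [he, IsUnit.unit_spec]⟩

theorem stmt_13
    (K : Type*) [Field K] [NumberField K] (hK : Module.finrank ℚ K = 2)
    (f : ℕ) (hf : f.Prime)
    (O : Subring (𝓞 K))
    (hO : ∀ x : 𝓞 K, x ∈ O ↔ ∃ n : ℤ, x - (n : 𝓞 K) ∈ Ideal.span {(f : 𝓞 K)})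
    (F : Ideal O) (hF : ∀ x : O, x ∈ F ↔ (x : 𝓞 K) ∈ Ideal.span {(f : 𝓞 K)})
    (σ : 𝓞 K ≃+* 𝓞 K) (hσ : σ ≠ RingEquiv.refl (𝓞 K))
    (P : Ideal (𝓞 K)) (hP : P.IsPrime)
    (hPσ : P ≠ Ideal.map σ.toRingHom P)
    (hsplit : Ideal.span {(f : 𝓞 K)} = P * Ideal.map σ.toRingHom P)
    (m : ℕ) (hm1 : 1 ≤ m)
    (hmmin : ∀ j : ℕ, 1 ≤ j → j < m → ¬ (P ^ j).IsPrincipal)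
    (β : 𝓞 K) (hβ : P ^ m = Ideal.span {β}) :
    (∀ t : O, IsFBasic F (Ideal.span {t}) ↔
      ∃ (n : ℕ) (w : (𝓞 K)ˣ), (t : 𝓞 K) = w * ((f : 𝓞 K) * β ^ n) ∨
        (t : 𝓞 K) = w * σ ((f : 𝓞 K) * β ^ n)) ∧
    (∀ n h : ℕ, 1 ≤ n → 1 ≤ h → ∀ (w w' : (𝓞 K)ˣ) (s s' s'' : O),
      (s : 𝓞 K) = (f : 𝓞 K) * β ^ n * w →
      (s' : 𝓞 K) = (f : 𝓞 K) * β ^ h * w' →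
      (s'' : 𝓞 K) = σ ((f : 𝓞 K) * β ^ h) * w' →
      ((Ideal.span {s} ≤ Ideal.span {s'} →
          n = h ∧ ((w * w'⁻¹ : (𝓞 K)ˣ) : 𝓞 K) ∈ O) ∧
        (¬ Ideal.span {s} ≤ Ideal.span {s''} ∧ ¬ Ideal.span {s''} ≤ Ideal.span {s}) ∧
        ¬ F ^ 2 ≤ Ideal.span {s})) := by
  classical
  set Q := Ideal.map σ.toRingHom P with hQdef
  have hPbot : P ≠ ⊥ := by
    intro h0
    exact hPσ (by rw [h0, hQdef, h0, Ideal.map_bot])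
  have hQbot : Q ≠ ⊥ := by
    intro h0
    rw [hQdef, Ideal.map_eq_bot_iff_of_injective (show Function.Injective σ.toRingHom from σ.injective)] at h0
    exact hPbot h0
  have hQprime : Q.IsPrime := by
    rw [hQdef]
    exact Ideal.map_isPrime_of_equiv σ
  have hf0 : (f : 𝓞 K) ≠ 0 := by
    intro h0
    have hb : P * Q = ⊥ := by
      rw [← hsplit, h0]
      exact Ideal.span_singleton_eq_bot.mpr rfl
    rcases Ideal.mul_eq_bot.mp hb with h | h
    exacts [hPbot h, hQbot h]
  have hfu : ¬ IsUnit (f : 𝓞 K) := by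
    intro hu
    have htop : P * Q = ⊤ := by rw [← hsplit, Ideal.span_singleton_eq_top.mpr hu]
    exact hP.ne_top (top_le_iff.mp (htop ▸ Ideal.mul_le_left))
  have hPmax : P.IsMaximal := hP.isMaximal hPbot
  have hQmax : Q.IsMaximal := hQprime.isMaximal hQbot
  have hPp : Prime P := Ideal.prime_of_isPrime hPbot hP
  have hQp : Prime Q := Ideal.prime_of_isPrime hQbot hQprime
  have hPdQ : ¬ P ∣ Q := by
    intro hd
    exact hPσ ((hQmax.eq_of_le hP.ne_top (Ideal.dvd_iff_le.mp hd)).symm)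
  have hQdP : ¬ Q ∣ P := by
    intro hd
    exact hPσ (hPmax.eq_of_le hQprime.ne_top (Ideal.dvd_iff_le.mp hd))
  have hQndvd : ∀ k : ℕ, ¬ Q ∣ P ^ k := fun k hk => hQdP (hQp.dvd_of_dvd_pow hk)
  have hPndvd : ∀ k : ℕ, ¬ P ∣ Q ^ k := fun k hk => hPdQ (hPp.dvd_of_dvd_pow hk)
  have hP0 : P ≠ 0 := hPbot
  have hQ0 : Q ≠ 0 := hQbot
  have hβ0 : β ≠ 0 := by
    intro h0
    have hb : P ^ m = ⊥ := by
      rw [hβ, h0]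
      exact Ideal.span_singleton_eq_bot.mpr rfl
    exact hPbot (pow_eq_zero_iff (by omega) |>.mp hb)
  have hσf : σ (f : 𝓞 K) = f := map_natCast σ f
  have hQm : Q ^ m = Ideal.span {σ β} := by
    rw [hQdef, ← Ideal.map_pow, hβ, Ideal.map_span, Set.image_singleton]
    rfl
  have hfP : (f : 𝓞 K) ∈ P := by
    have hle : Ideal.span {(f : 𝓞 K)} ≤ P := hsplit ▸ Ideal.mul_le_left
    exact hle (Ideal.mem_span_singleton_self _)
  have hfQ : (f : 𝓞 K) ∈ Q := by
    have hle : Ideal.span {(f : 𝓞 K)} ≤ Q := hsplit ▸ Ideal.mul_le_right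
    exact hle (Ideal.mem_span_singleton_self _)
  have hkeyP : ∀ x : 𝓞 K, x ∈ O → x ∈ P → (f : 𝓞 K) ∣ x := by
    intro x hxO hxP
    refine aux_keyO f hf P hP hfP x ?_ hxP
    obtain ⟨n, hn⟩ := (hO x).mp hxO
    exact ⟨n, Ideal.mem_span_singleton.mp hn⟩
  have hkeyQ : ∀ x : 𝓞 K, x ∈ O → x ∈ Q → (f : 𝓞 K) ∣ x := by
    intro x hxO hxQ
    refine aux_keyO f hf Q hQprime hfQ x ?_ hxQ
    obtain ⟨n, hn⟩ := (hO x).mp hxO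
    exact ⟨n, Ideal.mem_span_singleton.mp hn⟩
  have hspan1 : ∀ (n : ℕ) (u : 𝓞 K), IsUnit u →
      Ideal.span {(f : 𝓞 K) * β ^ n * u} = P ^ (m * n + 1) * Q := by
    intro n u hu
    rw [← Ideal.span_singleton_mul_span_singleton, ← Ideal.span_singleton_mul_span_singleton,
      Ideal.span_singleton_eq_top.mpr hu, Ideal.mul_top, ← Ideal.span_singleton_pow, hsplit,
      ← hβ, ← pow_mul, pow_succ]
    ring
  have hspan2 : ∀ (n : ℕ) (u : 𝓞 K), IsUnit u →
      Ideal.span {σ ((f : 𝓞 K) * β ^ n) * u} = P * Q ^ (m * n + 1) := by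
    intro n u hu
    rw [map_mul, map_pow, hσf,
      ← Ideal.span_singleton_mul_span_singleton, ← Ideal.span_singleton_mul_span_singleton,
      Ideal.span_singleton_eq_top.mpr hu, Ideal.mul_top, ← Ideal.span_singleton_pow, hsplit,
      ← hQm, ← pow_mul, pow_succ]
    ring
  have hOmem : ∀ x : 𝓞 K, (f : 𝓞 K) ∣ x → x ∈ O := by
    intro x hx
    refine (hO x).mpr ⟨0, ?_⟩
    rw [Ideal.mem_span_singleton]
    simpa using hx
  have hFmem : ∀ x : O, x ∈ F ↔ (f : 𝓞 K) ∣ (x : 𝓞 K) := fun x =>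
    (hF x).trans Ideal.mem_span_singleton
  have hfF : (f : O) ∈ F := (hFmem _).mpr (by push_cast; exact dvd_refl _)
  have hF2 : ∀ x : O, x ∈ F ^ 2 → (f : 𝓞 K) ^ 2 ∣ (x : 𝓞 K) := by
    intro x hx
    have hle : F ^ 2 ≤ Ideal.comap (O.subtype) (Ideal.span {(f : 𝓞 K) ^ 2}) := by
      rw [pow_two]
      refine Ideal.mul_le.mpr ?_
      intro r hr s hs
      rw [Ideal.mem_comap]
      obtain ⟨a, ha⟩ := (hFmem r).mp hr
      obtain ⟨b, hb⟩ := (hFmem s).mp hs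
      refine Ideal.mem_span_singleton.mpr ⟨a * b, ?_⟩
      show ((r * s : O) : 𝓞 K) = _
      push_cast
      rw [ha, hb]; ring
    have hm := hle hx
    rw [Ideal.mem_comap] at hm
    exact Ideal.mem_span_singleton.mp hm
  have hF2' : ∀ x : O, (f : 𝓞 K) ^ 2 ∣ (x : 𝓞 K) → x ∈ F ^ 2 := by
    intro x hx
    obtain ⟨a, ha⟩ := hx
    have hfa : (f : 𝓞 K) * a ∈ O := hOmem _ ⟨a, rfl⟩
    have hfaF : (⟨(f : 𝓞 K) * a, hfa⟩ : O) ∈ F := (hFmem _).mpr ⟨a, rfl⟩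
    have hxeq : x = (f : O) * ⟨(f : 𝓞 K) * a, hfa⟩ := by
      apply Subtype.ext
      push_cast
      rw [ha]; ring
    rw [hxeq, pow_two]
    exact Ideal.mul_mem_mul hfF hfaF
  have hFmax : F.IsMaximal := by
    rw [Ideal.isMaximal_iff]
    constructor
    · intro h1
      have hd := (hFmem 1).mp h1
      exact hfu (isUnit_of_dvd_one (by simpa using hd))
    · intro J x hFJ hxF hxJ
      obtain ⟨n, hn⟩ := (hO ↑x).mp x.2
      rw [Ideal.mem_span_singleton] at hn
      have hfn : ¬ (f : ℤ) ∣ n := by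
        rintro ⟨a, ha⟩
        apply hxF
        apply (hFmem x).mpr
        obtain ⟨c, hc⟩ := hn
        refine ⟨c + a, ?_⟩
        have : ((n : ℤ) : 𝓞 K) = (f : 𝓞 K) * (a : ℤ) := by
          rw [ha]; push_cast; ring
        have h2 : (x : 𝓞 K) = ((x : 𝓞 K) - (n : ℤ)) + ((n : ℤ) : 𝓞 K) := by ring
        rw [h2, hc, this]; push_cast; ring
      have hcop : IsCoprime (f : ℤ) n :=
        (Prime.coprime_iff_not_dvd (Nat.prime_iff_prime_int.mp hf)).mpr hfn
      obtain ⟨u, v, huv⟩ := hcop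
      -- xn := x - n ∈ F
      obtain ⟨c, hc⟩ := hn
      have hxnO : (x : 𝓞 K) - (n : ℤ) ∈ O := hOmem _ ⟨c, hc⟩
      set xn : O := ⟨(x : 𝓞 K) - (n : ℤ), hxnO⟩ with hxn
      have hxnF : xn ∈ F := (hFmem _).mpr ⟨c, hc⟩
      have hkey : (1 : O) = (u : O) * (f : O) + (v : O) * x - (v : O) * xn := by
        apply Subtype.ext
        push_cast
        have := congrArg (fun z : ℤ => (z : 𝓞 K)) huv
        push_cast at this
        linear_combination -this
      rw [hkey]
      refine J.sub_mem (J.add_mem (J.mul_mem_left _ (hFJ hfF)) (J.mul_mem_left _ hxJ))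
        (J.mul_mem_left _ (hFJ hxnF))
  have forward : ∀ t : O, IsFBasic F (Ideal.span {t}) →
      ∃ (n : ℕ) (w : (𝓞 K)ˣ), (t : 𝓞 K) = w * ((f : 𝓞 K) * β ^ n) ∨
        (t : 𝓞 K) = w * σ ((f : 𝓞 K) * β ^ n) := by
    rintro t ⟨⟨hprim, hrad⟩, hnotF2⟩
    have htF : (f : 𝓞 K) ∣ (t : 𝓞 K) := by
      have hm := hrad ▸ Ideal.le_radical (Ideal.mem_span_singleton_self t)
      exact (hFmem t).mp hm
    have hfFrad : (f : O) ∈ (Ideal.span {t}).radical := by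
      rw [hrad]; exact hfF
    obtain ⟨k, hk⟩ := Ideal.mem_radical_iff.mp hfFrad
    obtain ⟨x, hx⟩ := Ideal.mem_span_singleton.mp hk
    have htfk : (t : 𝓞 K) ∣ (f : 𝓞 K) ^ k := by
      refine ⟨x, ?_⟩
      have := congrArg (fun z : O => (z : 𝓞 K)) hx
      push_cast at this
      exact this
    obtain ⟨d, hd⟩ := htF
    have hfd : ¬ (f : 𝓞 K) ∣ d := by
      rintro ⟨c, hcc⟩
      apply hnotF2
      rw [Ideal.span_le, Set.singleton_subset_iff]
      exact hF2' t ⟨c, by rw [hd, hcc]; ring⟩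
    have hdfk : d ∣ (f : 𝓞 K) ^ k := dvd_trans ⟨(f : 𝓞 K), by rw [hd]; ring⟩ htfk
    have hAd : Ideal.span {d} ∣ P ^ k * Q ^ k := by
      have hh := Ideal.dvd_iff_le.mpr (Ideal.span_singleton_le_span_singleton.mpr hdfk)
      rwa [← Ideal.span_singleton_pow, hsplit, mul_pow] at hh
    have hnotboth : ¬ (P ∣ Ideal.span {d} ∧ Q ∣ Ideal.span {d}) := by
      rintro ⟨⟨B, hB⟩, hQd⟩
      rw [hB] at hQd
      rcases (hQp.2.2 P B hQd) with hh | hh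
      · exact hQdP hh
      · obtain ⟨C, hC⟩ := hh
        apply hfd
        refine Ideal.span_singleton_le_span_singleton.mp (Ideal.dvd_iff_le.mp ?_)
        rw [hsplit]
        exact ⟨C, by rw [hB, hC]; ring⟩
    have hdivpow : ∀ (R1 R2 : Ideal (𝓞 K)), R2.IsMaximal → Prime R1 →
        Ideal.span {d} ∣ R1 ^ k * R2 ^ k → ¬ R2 ∣ Ideal.span {d} →
        ∃ i, Ideal.span {d} = R1 ^ i := by
      intro R1 R2 hR2max hR1p hdvd hnd
      have hcop : IsCoprime (Ideal.span {d}) R2 := by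
        rw [Ideal.isCoprime_iff_sup_eq]
        by_contra hne
        have heq2 := hR2max.eq_of_le hne le_sup_right
        exact hnd (Ideal.dvd_iff_le.mpr (le_trans le_sup_left heq2.symm.le))
      have hdvdP : Ideal.span {d} ∣ R1 ^ k := (hcop.pow_right).dvd_of_dvd_mul_right hdvd
      obtain ⟨i, _, hassoc⟩ := (dvd_prime_pow hR1p k).mp hdvdP
      exact ⟨i, associated_iff_eq.mp hassoc⟩
    have hcases : (¬ Q ∣ Ideal.span {d}) ∨ (¬ P ∣ Ideal.span {d}) := by tauto
    rcases hcases with hnQ2 | hnP2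
    · obtain ⟨i, hi⟩ := hdivpow P Q hQmax hPp hAd hnQ2
      obtain ⟨q, e, hiq, hde⟩ := aux_PL P hPbot m hm1 hmmin β hβ i d hi
      refine ⟨q, e, Or.inl ?_⟩
      rw [hd, hde]; ring
    · obtain ⟨i, hi⟩ := hdivpow Q P hPmax hQp (by rwa [mul_comm] at hAd) hnP2
      have hd' : Ideal.span {σ.symm d} = P ^ i := by
        have h1 : Ideal.map σ.symm.toRingHom (Ideal.span {d}) = Ideal.span {σ.symm d} := by
          rw [Ideal.map_span, Set.image_singleton]; rfl
        have h2 : Ideal.map σ.symm.toRingHom (Q ^ i) = P ^ i := by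
          rw [Ideal.map_pow]
          congr 1
          rw [hQdef, Ideal.map_map, RingEquiv.symm_toRingHom_comp_toRingHom, Ideal.map_id]
        rw [← h1, hi, h2]
      obtain ⟨q, e, hiq, hde⟩ := aux_PL P hPbot m hm1 hmmin β hβ i (σ.symm d) hd'
      have hdd : d = σ β ^ q * σ (e : 𝓞 K) := by
        have hs2 := congrArg σ hde
        rw [RingEquiv.apply_symm_apply] at hs2
        rw [hs2, map_mul, map_pow]
      have hue : IsUnit (σ (e : 𝓞 K)) := (Units.isUnit e).map σ.toRingHom
      refine ⟨q, hue.unit, Or.inr ?_⟩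
      rw [hd, hdd, IsUnit.unit_spec, map_mul, map_pow, hσf]
      ring
  have main : ∀ (γ : 𝓞 K) (R1 R2 : Ideal (𝓞 K)), R1 ≠ 0 → R2 ≠ 0 → Prime R2 →
      (¬ R2 ∣ R1) →
      Ideal.span {γ} = R1 ^ m → Ideal.span {(f : 𝓞 K)} = R1 * R2 →
      ∀ (n : ℕ) (w : (𝓞 K)ˣ) (t : O), (t : 𝓞 K) = w * ((f : 𝓞 K) * γ ^ n) →
      IsFBasic F (Ideal.span {t}) := by
    intro γ R1 R2 hR10 hR20 hR2p hR2dR1 hγ hfsplit n w t hteq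
    have htF : (f : 𝓞 K) ∣ (t : 𝓞 K) := ⟨w * γ ^ n, by rw [hteq]; ring⟩
    -- the witness for f ^ (m*n+2) ∈ span {t}
    have hgdvd : γ ^ n ∣ (f : 𝓞 K) ^ (m * n + 1) := by
      refine Ideal.span_singleton_le_span_singleton.mp (Ideal.dvd_iff_le.mp ?_)
      rw [← Ideal.span_singleton_pow, ← Ideal.span_singleton_pow, hγ, hfsplit,
        ← pow_mul, mul_pow]
      exact dvd_mul_of_dvd_left (pow_dvd_pow R1 (by omega)) _
    obtain ⟨c, hc⟩ := hgdvd
    have hspanc : Ideal.span {c} = R1 * R2 ^ (m * n + 1) := by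
      refine mul_left_cancel₀ (pow_ne_zero (m * n) hR10) ?_
      have h1 : R1 ^ (m * n) * Ideal.span {c} = (R1 * R2) ^ (m * n + 1) := by
        rw [pow_mul, ← hγ, Ideal.span_singleton_pow, Ideal.span_singleton_mul_span_singleton,
          ← hc, ← Ideal.span_singleton_pow, hfsplit]
      rw [h1, mul_pow, pow_succ]
      ring
    have hfc : (f : 𝓞 K) ∣ c := by
      refine Ideal.span_singleton_le_span_singleton.mp (Ideal.dvd_iff_le.mp ?_)
      rw [hfsplit, hspanc]
      exact mul_dvd_mul dvd_rfl (dvd_pow_self R2 (by omega))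
    have hyO : ((w⁻¹ : (𝓞 K)ˣ) : 𝓞 K) * c ∈ O := hOmem _ (hfc.mul_left _)
    set y : O := ⟨((w⁻¹ : (𝓞 K)ˣ) : 𝓞 K) * c, hyO⟩ with hy
    have hfk : (f : O) ^ (m * n + 2) = t * y := by
      apply Subtype.ext
      push_cast
      rw [hteq]
      calc ((f : 𝓞 K)) ^ (m * n + 2) = (f : 𝓞 K) * ((f : 𝓞 K) ^ (m * n + 1)) := by ring
        _ = (f : 𝓞 K) * (γ ^ n * c) := by rw [hc]
        _ = (↑w * ↑w⁻¹) * ((f : 𝓞 K) * (γ ^ n * c)) := by rw [Units.mul_inv, one_mul]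
        _ = ↑w * ((f : 𝓞 K) * γ ^ n) * (↑w⁻¹ * c) := by ring
    have hfkmem : (f : O) ^ (m * n + 2) ∈ Ideal.span {t} := by
      rw [hfk]
      exact Ideal.mem_span_singleton.mpr ⟨y, rfl⟩
    have hsletF : Ideal.span {t} ≤ F := by
      rw [Ideal.span_le, Set.singleton_subset_iff]
      exact (hFmem t).mpr htF
    have hradF : (Ideal.span {t}).radical = F := by
      apply le_antisymm
      · calc (Ideal.span {t}).radical ≤ F.radical := Ideal.radical_mono hsletF
          _ = F := hFmax.isPrime.radical
      · intro z hz
        obtain ⟨dz, hdz⟩ := (hFmem z).mp hz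
        have hzO : dz ^ (m * n + 2) * (z : 𝓞 K) ∈ O := by
          refine hOmem _ ?_
          exact Dvd.dvd.mul_left ⟨dz, hdz⟩ _
        refine Ideal.mem_radical_iff.mpr ⟨(m * n + 2) + 1, ?_⟩
        have hzeq : z ^ ((m * n + 2) + 1) = (f : O) ^ (m * n + 2) * ⟨_, hzO⟩ := by
          apply Subtype.ext
          push_cast
          rw [hdz]
          ring
        rw [hzeq]
        exact Ideal.mul_mem_right _ _ hfkmem
    refine ⟨⟨Ideal.isPrimary_of_isMaximal_radical (hradF ▸ hFmax), hradF⟩, ?_⟩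
    intro hle
    have htf2 : (f : 𝓞 K) ^ 2 ∣ (t : 𝓞 K) :=
      hF2 t (hle (Ideal.mem_span_singleton_self t))
    have hdvd2 : (f : 𝓞 K) ∣ ↑w * γ ^ n := by
      have heqt : (f : 𝓞 K) * (↑w * γ ^ n) = (t : 𝓞 K) := by rw [hteq]; ring
      have h2 : (f : 𝓞 K) * (f : 𝓞 K) ∣ (f : 𝓞 K) * (↑w * γ ^ n) := by
        rw [← pow_two, heqt]
        exact htf2
      exact (mul_dvd_mul_iff_left hf0).mp h2
    have hsp : Ideal.span {(↑w * γ ^ n : 𝓞 K)} = R1 ^ (m * n) := by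
      rw [← Ideal.span_singleton_mul_span_singleton, Ideal.span_singleton_eq_top.mpr w.isUnit,
        Ideal.top_mul, ← Ideal.span_singleton_pow, hγ, ← pow_mul]
    have hspanle : R1 ^ (m * n) ≤ R2 := by
      calc R1 ^ (m * n) = Ideal.span {(↑w * γ ^ n : 𝓞 K)} := hsp.symm
        _ ≤ Ideal.span {(f : 𝓞 K)} := Ideal.span_singleton_le_span_singleton.mpr hdvd2
        _ = R1 * R2 := hfsplit
        _ ≤ R2 := Ideal.mul_le_right
    exact hR2dR1 (hR2p.dvd_of_dvd_pow (Ideal.dvd_iff_le.mpr hspanle))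
  have hdiv : ∀ a b : O, Ideal.span {a} ≤ Ideal.span {b} →
      ∃ x : O, (a : 𝓞 K) = (b : 𝓞 K) * (x : 𝓞 K) ∧
        Ideal.span {(a : 𝓞 K)} = Ideal.span {(b : 𝓞 K)} * Ideal.span {(x : 𝓞 K)} := by
    intro a b hle
    obtain ⟨x, hx⟩ := Ideal.mem_span_singleton.mp (hle (Ideal.mem_span_singleton_self a))
    have hxD : (a : 𝓞 K) = ↑b * ↑x := by
      have := congrArg (fun z : O => (z : 𝓞 K)) hx
      push_cast at this
      exact this
    exact ⟨x, hxD, by rw [hxD, Ideal.span_singleton_mul_span_singleton]⟩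
  constructor
  · intro t
    constructor
    · exact forward t
    · rintro ⟨n, w, hcase | hcase⟩
      · exact main β P Q hP0 hQ0 hQp hQdP hβ.symm hsplit n w t hcase
      · refine main (σ β) Q P hQ0 hP0 hPp hPdQ hQm.symm (by rw [hsplit]; ring) n w t ?_
        rw [hcase, map_mul, map_pow, hσf]
  · intro n h hn1 hh1 w w' s s' s'' hseq hs'eq hs''eq
    have hs : Ideal.span {(s : 𝓞 K)} = P ^ (m*n+1) * Q := by
      rw [hseq]; exact hspan1 n ↑w w.isUnit
    have hs' : Ideal.span {(s' : 𝓞 K)} = P ^ (m*h+1) * Q := by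
      rw [hs'eq]; exact hspan1 h ↑w' w'.isUnit
    have hs'' : Ideal.span {(s'' : 𝓞 K)} = P * Q ^ (m*h+1) := by
      rw [hs''eq]; exact hspan2 h ↑w' w'.isUnit
    refine ⟨?_, ⟨?_, ?_⟩, ?_⟩
    · -- (a)
      intro hle
      obtain ⟨x, hxD, hxI⟩ := hdiv s s' hle
      have hideal : P ^ (m*n+1) * Q = P ^ (m*h+1) * Q * Ideal.span {(x : 𝓞 K)} := by
        rw [← hs, ← hs']; exact hxI
      have h3 : P ^ (m*n+1) = P ^ (m*h+1) * Ideal.span {(x : 𝓞 K)} := by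
        refine mul_left_cancel₀ hQ0 ?_
        calc Q * P ^ (m*n+1) = P ^ (m*n+1) * Q := mul_comm _ _
          _ = P ^ (m*h+1) * Q * Ideal.span {(x : 𝓞 K)} := hideal
          _ = Q * (P ^ (m*h+1) * Ideal.span {(x : 𝓞 K)}) := by ring
      have hhn : h ≤ n := by
        have hd := (aux_pow_dvd_pow_iff hPp).mp ⟨Ideal.span {(x : 𝓞 K)}, h3⟩
        have hmul : m * h ≤ m * n := by omega
        exact Nat.le_of_mul_le_mul_left hmul (by omega)
      have hnh : n = h := by
        by_contra hne
        have h4 : Ideal.span {(x : 𝓞 K)} = P ^ (m*(n-h)) := by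
          refine mul_left_cancel₀ (pow_ne_zero (m*h+1) hP0) ?_
          rw [← h3, ← pow_add]
          congr 1
          have hsub : m*(n-h) + m*h = m*n := by
            rw [← Nat.mul_add, Nat.sub_add_cancel hhn]
          omega
        have hxP : (x : 𝓞 K) ∈ P := by
          have hmm : (x : 𝓞 K) ∈ Ideal.span {(x : 𝓞 K)} := Ideal.mem_span_singleton_self _
          rw [h4] at hmm
          exact Ideal.pow_le_self (Nat.mul_ne_zero (by omega) (by omega)) hmm
        have hfx : (f : 𝓞 K) ∣ ↑x := hkeyP ↑x x.2 hxP
        have hcontra : P ^ (m*(n-h)) ≤ Q := by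
          rw [← h4]
          calc Ideal.span {(x : 𝓞 K)} ≤ Ideal.span {(f : 𝓞 K)} :=
                Ideal.span_singleton_le_span_singleton.mpr hfx
            _ = P * Q := hsplit
            _ ≤ Q := Ideal.mul_le_right
        exact hQndvd _ (Ideal.dvd_iff_le.mpr hcontra)
      subst hnh
      refine ⟨rfl, ?_⟩
      have hfb0 : (f : 𝓞 K) * β ^ n ≠ 0 := mul_ne_zero hf0 (pow_ne_zero _ hβ0)
      have e1 : (f : 𝓞 K) * β ^ n * ↑w = (f : 𝓞 K) * β ^ n * (↑w' * ↑x) := by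
        rw [← hseq, hxD, hs'eq]; ring
      have e2 : (↑w : 𝓞 K) = ↑w' * ↑x := mul_left_cancel₀ hfb0 e1
      have e3 : ((w * w'⁻¹ : (𝓞 K)ˣ) : 𝓞 K) = ↑x := by
        rw [Units.val_mul]
        calc (↑w : 𝓞 K) * ↑w'⁻¹ = (↑w' * ↑x) * ↑w'⁻¹ := by rw [e2]
          _ = (↑w' * ↑w'⁻¹) * ↑x := by ring
          _ = ↑x := by rw [Units.mul_inv, one_mul]
      rw [e3]
      exact x.2
    · -- (b1)
      intro hle
      obtain ⟨x, hxD, hxI⟩ := hdiv s s'' hle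
      have hideal : P ^ (m*n+1) * Q = P * Q ^ (m*h+1) * Ideal.span {(x : 𝓞 K)} := by
        rw [← hs, ← hs'']; exact hxI
      have hQdvd : Q ^ (m*h+1) ∣ P ^ (m*n+1) * Q :=
        ⟨P * Ideal.span {(x : 𝓞 K)}, by rw [hideal]; ring⟩
      have h2 : Q ^ 2 ∣ P ^ (m*n+1) * Q := by
        refine dvd_trans (pow_dvd_pow Q ?_) hQdvd
        have := Nat.mul_le_mul hm1 hh1
        omega
      obtain ⟨C, hC⟩ := h2
      have h3 : P ^ (m*n+1) = Q * C := by
        refine mul_left_cancel₀ hQ0 ?_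
        calc Q * P ^ (m*n+1) = P ^ (m*n+1) * Q := mul_comm _ _
          _ = Q ^ 2 * C := hC
          _ = Q * (Q * C) := by ring
      exact hQndvd (m*n+1) ⟨C, h3⟩
    · -- (b2)
      intro hle
      obtain ⟨x, hxD, hxI⟩ := hdiv s'' s hle
      have hideal : P * Q ^ (m*h+1) = P ^ (m*n+1) * Q * Ideal.span {(x : 𝓞 K)} := by
        rw [← hs'', ← hs]; exact hxI
      have hPdvd : P ^ (m*n+1) ∣ P * Q ^ (m*h+1) :=
        ⟨Q * Ideal.span {(x : 𝓞 K)}, by rw [hideal]; ring⟩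
      have h2 : P ^ 2 ∣ P * Q ^ (m*h+1) := by
        refine dvd_trans (pow_dvd_pow P ?_) hPdvd
        have := Nat.mul_le_mul hm1 hn1
        omega
      obtain ⟨C, hC⟩ := h2
      have h3 : Q ^ (m*h+1) = P * C := by
        refine mul_left_cancel₀ hP0 ?_
        calc P * Q ^ (m*h+1) = P ^ 2 * C := hC
          _ = P * (P * C) := by ring
      exact hPndvd (m*h+1) ⟨C, h3⟩
    · -- (c)
      intro hle
      have hf2 : (f : O) ^ 2 ∈ F ^ 2 := Ideal.pow_mem_pow hfF 2
      obtain ⟨x, hx⟩ := Ideal.mem_span_singleton.mp (hle hf2)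
      have hxD : ((f : 𝓞 K)) ^ 2 = (s : 𝓞 K) * ↑x := by
        have := congrArg (fun z : O => (z : 𝓞 K)) hx
        push_cast at this
        exact this
      have hfe : (f : 𝓞 K) = β ^ n * (↑w * ↑x) := by
        refine mul_left_cancel₀ hf0 ?_
        calc (f : 𝓞 K) * (f : 𝓞 K) = (f : 𝓞 K) ^ 2 := by ring
          _ = ↑s * ↑x := hxD
          _ = (f : 𝓞 K) * (β ^ n * (↑w * ↑x)) := by rw [hseq]; ring
      have hPQX : P * Q = P ^ (m*n) * Ideal.span {(x : 𝓞 K)} := by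
        rw [← hsplit, hfe, ← Ideal.span_singleton_mul_span_singleton,
          ← Ideal.span_singleton_mul_span_singleton,
          Ideal.span_singleton_eq_top.mpr w.isUnit, Ideal.top_mul,
          ← Ideal.span_singleton_pow, ← hβ, ← pow_mul]
      have hmn1 : 1 ≤ m * n := by
        have := Nat.mul_le_mul hm1 hn1
        omega
      have hpowsplit : m * n = (m * n - 1) + 1 := by omega
      have h5 : Q = P ^ (m*n-1) * Ideal.span {(x : 𝓞 K)} := by
        refine mul_left_cancel₀ hP0 ?_
        rw [hPQX, ← mul_assoc, ← pow_succ']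
        have hrw : (m * n - 1) + 1 = m * n := by omega
        rw [hrw]
      rcases Nat.eq_or_lt_of_le hmn1 with h1 | h2
      · rw [show m*n-1 = 0 by omega, pow_zero, one_mul] at h5
        have hxQ : (x : 𝓞 K) ∈ Q := by
          rw [h5]; exact Ideal.mem_span_singleton_self _
        have hfx := hkeyQ ↑x x.2 hxQ
        have hQP : Q ≤ P := by
          rw [h5]
          calc Ideal.span {(x : 𝓞 K)} ≤ Ideal.span {(f : 𝓞 K)} :=
                Ideal.span_singleton_le_span_singleton.mpr hfx
            _ = P * Q := hsplit
            _ ≤ P := Ideal.mul_le_left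
        exact hPσ ((hQmax.eq_of_le hP.ne_top hQP).symm)
      · refine hPdQ ⟨P ^ (m*n-2) * Ideal.span {(x : 𝓞 K)}, ?_⟩
        rw [h5, show m*n-1 = (m*n-2)+1 by omega, pow_succ]
        ring
end

section
/- Suppose fD = P² for a prime ideal P of D (f ramified in D). Then there exists an 𝔉-basic element t ∈ O with P⁵ ⊊ tO ⊊ P³ if and only if P is a principal ideal of D. Moreover, if P = βD for some β ∈ D, then an element t ∈ O satisfies P⁵ ⊊ tO ⊊ P³ if and only if t = fβw for some unit w of D. -/
set_option synthInstance.maxHeartbeats 1000000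
set_option maxHeartbeats 1000000

open NumberField

theorem stmt_19
    (K : Type*) [Field K] [NumberField K] (hK : Module.finrank ℚ K = 2)
    (f : ℕ) (hf : f.Prime)
    (O : Subring (𝓞 K))
    (hO : ∀ x : 𝓞 K, x ∈ O ↔ ∃ n : ℤ, x - (n : 𝓞 K) ∈ Ideal.span {(f : 𝓞 K)})
    (F : Ideal O) (hF : ∀ x : O, x ∈ F ↔ (x : 𝓞 K) ∈ Ideal.span {(f : 𝓞 K)})
    (P : Ideal (𝓞 K)) (hP : P.IsPrime)
    (hram : Ideal.span {(f : 𝓞 K)} = P ^ 2) :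
    ((∃ t : O, IsFBasic F (Ideal.span {t}) ∧
        ((P ^ 5 : Ideal (𝓞 K)) : Set (𝓞 K)) ⊂
          Subtype.val '' ((Ideal.span {t} : Ideal O) : Set O) ∧
        Subtype.val '' ((Ideal.span {t} : Ideal O) : Set O) ⊂
          ((P ^ 3 : Ideal (𝓞 K)) : Set (𝓞 K))) ↔ P.IsPrincipal) ∧
    (∀ β : 𝓞 K, P = Ideal.span {β} → ∀ t : O,
      ((((P ^ 5 : Ideal (𝓞 K)) : Set (𝓞 K)) ⊂
          Subtype.val '' ((Ideal.span {t} : Ideal O) : Set O) ∧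
        Subtype.val '' ((Ideal.span {t} : Ideal O) : Set O) ⊂
          ((P ^ 3 : Ideal (𝓞 K)) : Set (𝓞 K))) ↔
        ∃ w : (𝓞 K)ˣ, (t : 𝓞 K) = (f : 𝓞 K) * β * w)) := by
  classical
  have hf0 : (f : 𝓞 K) ≠ 0 := Nat.cast_ne_zero.mpr hf.pos.ne'
  have hPtop : P ≠ ⊤ := hP.ne_top
  have hPbot : P ≠ ⊥ := by
    intro h
    apply hf0
    have : Ideal.span {(f : 𝓞 K)} = ⊥ := by rw [hram, h, pow_two, Ideal.mul_bot]
    exact Ideal.span_singleton_eq_bot.mp this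
  have hprime : Prime P := Ideal.prime_of_isPrime hPbot hP
  have hfP : (f : 𝓞 K) ∈ P := by
    have h1 : (f : 𝓞 K) ∈ Ideal.span {(f : 𝓞 K)} := Ideal.mem_span_singleton_self _
    rw [hram] at h1
    exact P.pow_le_self two_ne_zero h1
  -- L1 : integers in P are divisible by f
  have L1 : ∀ n : ℤ, ((n : ℤ) : 𝓞 K) ∈ P → (f : ℤ) ∣ n := by
    intro n hnP
    by_contra hdvd
    have hcop : IsCoprime ((f : ℕ) : ℤ) n :=
      ((Nat.prime_iff_prime_int.mp hf).coprime_iff_not_dvd).mpr hdvd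
    obtain ⟨a, b, hab⟩ := hcop
    apply hPtop
    rw [Ideal.eq_top_iff_one]
    have h1 : ((1 : ℤ) : 𝓞 K) = (a : 𝓞 K) * (f : 𝓞 K) + (b : 𝓞 K) * ((n : ℤ) : 𝓞 K) := by
      rw [← hab]; push_cast; ring
    have : (1 : 𝓞 K) = (a : 𝓞 K) * (f : 𝓞 K) + (b : 𝓞 K) * ((n : ℤ) : 𝓞 K) := by
      simpa using h1
    rw [this]
    exact P.add_mem (P.mul_mem_left _ hfP) (P.mul_mem_left _ hnP)
  -- L2 : elements of O lying in P lie in fD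
  have L2 : ∀ x : 𝓞 K, x ∈ O → x ∈ P → x ∈ Ideal.span {(f : 𝓞 K)} := by
    intro x hxO hxP
    obtain ⟨n, hn⟩ := (hO x).mp hxO
    have hnP : ((n : ℤ) : 𝓞 K) ∈ P := by
      have h1 : x - n ∈ P := by
        rw [hram] at hn; exact P.pow_le_self two_ne_zero hn
      have h2 : ((n : ℤ) : 𝓞 K) = x - (x - n) := by ring
      rw [h2]; exact P.sub_mem hxP h1
    obtain ⟨m, rfl⟩ := L1 n hnP
    have h3 : ((((f : ℤ) * m : ℤ)) : 𝓞 K) ∈ Ideal.span {(f : 𝓞 K)} :=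
      Ideal.mem_span_singleton.2 ⟨(m : 𝓞 K), by push_cast; ring⟩
    have h4 : x = (x - (((f : ℤ) * m : ℤ) : 𝓞 K)) + (((f : ℤ) * m : ℤ) : 𝓞 K) := by ring
    rw [h4]; exact add_mem hn h3
  -- L3 : an element of P not in P^2
  obtain ⟨p, hpP, hpP2⟩ : ∃ p, p ∈ P ∧ p ∉ P ^ 2 := by
    obtain ⟨x, hx1, hx2⟩ := P.exists_mem_pow_notMem_pow_succ hPbot hPtop 1
    rw [pow_one] at hx1
    exact ⟨x, hx1, hx2⟩
  -- L4 : an element of D not in O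
  obtain ⟨d₀, hd₀⟩ : ∃ d : 𝓞 K, d ∉ O := by
    refine ⟨p, fun hpO => hpP2 ?_⟩
    rw [← hram]
    exact L2 p hpO hpP
  -- membership in the image set
  have memT : ∀ (t : O) (x : 𝓞 K),
      x ∈ Subtype.val '' ((Ideal.span {t} : Ideal O) : Set O) ↔
        ∃ c : O, x = (t : 𝓞 K) * (c : 𝓞 K) := by
    intro t x
    constructor
    · rintro ⟨s, hs, rfl⟩
      rw [SetLike.mem_coe, Ideal.mem_span_singleton] at hs
      obtain ⟨c, rfl⟩ := hs
      exact ⟨c, by push_cast; ring⟩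
    · rintro ⟨c, rfl⟩
      exact ⟨t * c, Ideal.mem_span_singleton.2 ⟨c, rfl⟩, by push_cast; ring⟩
  -- lemma A : if P = βD and t = f β then the two strict containments hold
  have lemA : ∀ β : 𝓞 K, P = Ideal.span {β} → ∀ t : O, (t : 𝓞 K) = (f : 𝓞 K) * β →
      (((P ^ 5 : Ideal (𝓞 K)) : Set (𝓞 K)) ⊂
          Subtype.val '' ((Ideal.span {t} : Ideal O) : Set O) ∧
        Subtype.val '' ((Ideal.span {t} : Ideal O) : Set O) ⊂
          ((P ^ 3 : Ideal (𝓞 K)) : Set (𝓞 K))) := by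
    intro β hβ t ht
    have hβ0 : β ≠ 0 := by
      rintro rfl
      exact hPbot (hβ.trans (Ideal.span_singleton_eq_bot.mpr rfl))
    obtain ⟨u, hu⟩ : Associated ((f : 𝓞 K)) (β ^ 2) :=
      Ideal.span_singleton_eq_span_singleton.mp
        (by rw [hram, hβ, Ideal.span_singleton_pow])
    have huu : (u : 𝓞 K) * (↑u⁻¹ : 𝓞 K) = 1 := u.mul_inv
    have hfeq : (f : 𝓞 K) = β ^ 2 * (↑u⁻¹ : 𝓞 K) := by
      rw [← hu, mul_assoc, u.mul_inv, mul_one]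
    have ht0 : (t : 𝓞 K) ≠ 0 := by rw [ht]; exact mul_ne_zero hf0 hβ0
    have hP3 : P ^ 3 = Ideal.span {β ^ 3} := by rw [hβ, Ideal.span_singleton_pow]
    have hP5 : P ^ 5 = Ideal.span {β ^ 5} := by rw [hβ, Ideal.span_singleton_pow]
    -- right inclusion
    have hsubR : Subtype.val '' ((Ideal.span {t} : Ideal O) : Set O) ⊆
        ((P ^ 3 : Ideal (𝓞 K)) : Set (𝓞 K)) := by
      intro x hx
      rw [memT] at hx
      obtain ⟨c, rfl⟩ := hx
      rw [SetLike.mem_coe, hP3, Ideal.mem_span_singleton]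
      exact ⟨(↑u⁻¹ : 𝓞 K) * c, by rw [ht, hfeq]; ring⟩
    -- strictness on the right
    have hstrictR : Subtype.val '' ((Ideal.span {t} : Ideal O) : Set O) ⊂
        ((P ^ 3 : Ideal (𝓞 K)) : Set (𝓞 K)) := by
      rw [Set.ssubset_iff_of_subset hsubR]
      refine ⟨(t : 𝓞 K) * d₀, ?_, ?_⟩
      · rw [SetLike.mem_coe, hP3, Ideal.mem_span_singleton]
        exact ⟨(↑u⁻¹ : 𝓞 K) * d₀, by rw [ht, hfeq]; ring⟩
      · intro hmem
        rw [memT] at hmem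
        obtain ⟨c, hc⟩ := hmem
        exact hd₀ (by rw [mul_left_cancel₀ ht0 hc]; exact c.2)
    -- left inclusion
    have hsubL : ((P ^ 5 : Ideal (𝓞 K)) : Set (𝓞 K)) ⊆
        Subtype.val '' ((Ideal.span {t} : Ideal O) : Set O) := by
      intro x hx
      rw [SetLike.mem_coe, hP5, Ideal.mem_span_singleton] at hx
      obtain ⟨c, rfl⟩ := hx
      rw [memT]
      have hcO : β ^ 2 * (u : 𝓞 K) * c ∈ O := by
        refine (hO _).mpr ⟨0, ?_⟩
        rw [Int.cast_zero, sub_zero]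
        exact Ideal.mem_span_singleton.2 ⟨(u : 𝓞 K) * (u : 𝓞 K) * c, by rw [← hu]; ring⟩
      refine ⟨⟨β ^ 2 * (u : 𝓞 K) * c, hcO⟩, ?_⟩
      show β ^ 5 * c = (t : 𝓞 K) * (β ^ 2 * (u : 𝓞 K) * c)
      rw [ht]
      linear_combination (-(β ^ 3 * c)) * hu
    -- strictness on the left
    have hstrictL : ((P ^ 5 : Ideal (𝓞 K)) : Set (𝓞 K)) ⊂
        Subtype.val '' ((Ideal.span {t} : Ideal O) : Set O) := by
      rw [Set.ssubset_iff_of_subset hsubL]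
      refine ⟨(t : 𝓞 K), (memT t _).mpr ⟨1, by push_cast; ring⟩, ?_⟩
      intro hmem
      rw [SetLike.mem_coe, hP5, Ideal.mem_span_singleton] at hmem
      obtain ⟨s, hs⟩ := hmem
      have htβ : (t : 𝓞 K) = β ^ 3 * (↑u⁻¹ : 𝓞 K) := by rw [ht, hfeq]; ring
      have hcan : (↑u⁻¹ : 𝓞 K) = β ^ 2 * s :=
        mul_left_cancel₀ (pow_ne_zero 3 hβ0) (by rw [← htβ, hs]; ring)
      have hone : β * (β * s * (u : 𝓞 K)) = 1 := by
        rw [show β * (β * s * (u : 𝓞 K)) = β ^ 2 * s * (u : 𝓞 K) by ring, ← hcan,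
          u.inv_mul]
      apply hPtop
      rw [hβ]
      exact Ideal.span_singleton_eq_top.mpr (IsUnit.of_mul_eq_one _ hone)
    exact ⟨hstrictL, hstrictR⟩
  -- lemma B : the containments force span {t} = P ^ 3
  have lemB : ∀ t : O,
      (((P ^ 5 : Ideal (𝓞 K)) : Set (𝓞 K)) ⊂
          Subtype.val '' ((Ideal.span {t} : Ideal O) : Set O) ∧
        Subtype.val '' ((Ideal.span {t} : Ideal O) : Set O) ⊂
          ((P ^ 3 : Ideal (𝓞 K)) : Set (𝓞 K))) →
      Ideal.span {(t : 𝓞 K)} = P ^ 3 := by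
    rintro t ⟨h5, h3⟩
    have htT : (t : 𝓞 K) ∈ Subtype.val '' ((Ideal.span {t} : Ideal O) : Set O) :=
      (memT t _).mpr ⟨1, by push_cast; ring⟩
    have ht3 : (t : 𝓞 K) ∈ P ^ 3 := h3.subset htT
    have hTle : Subtype.val '' ((Ideal.span {t} : Ideal O) : Set O) ⊆
        ((Ideal.span {(t : 𝓞 K)} : Ideal (𝓞 K)) : Set (𝓞 K)) := by
      intro x hx
      rw [memT] at hx
      obtain ⟨c, rfl⟩ := hx
      exact Ideal.mem_span_singleton.2 ⟨c, rfl⟩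
    have h5le : P ^ 5 ≤ Ideal.span {(t : 𝓞 K)} := fun x hx => hTle (h5.subset hx)
    have hne5 : Ideal.span {(t : 𝓞 K)} ≠ P ^ 5 := by
      intro h
      apply h5.not_subset
      intro x hx
      have := hTle hx
      rw [h] at this
      exact this
    have hdvd : Ideal.span {(t : 𝓞 K)} ∣ P ^ 5 := Ideal.dvd_iff_le.mpr h5le
    obtain ⟨k, hk5, hkassoc⟩ := (dvd_prime_pow hprime 5).mp hdvd
    have hkeq : Ideal.span {(t : 𝓞 K)} = P ^ k := associated_iff_eq.mp hkassoc
    have hk3 : 3 ≤ k := by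
      have hle : P ^ k ≤ P ^ 3 := by
        rw [← hkeq]
        exact (Ideal.span_singleton_le_iff_mem _).mpr ht3
      exact ((P.pow_right_strictAnti hPbot hPtop).le_iff_ge).mp hle
    have hk4 : k ≠ 4 := by
      rintro rfl
      have hP4 : (P : Ideal (𝓞 K)) ^ 4 = Ideal.span {(f : 𝓞 K) ^ 2} := by
        rw [show (4 : ℕ) = 2 * 2 from rfl, pow_mul, ← hram, Ideal.span_singleton_pow]
      have hsp : Ideal.span {(t : 𝓞 K)} = Ideal.span {(f : 𝓞 K) ^ 2} := by
        rw [hkeq, hP4]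
      obtain ⟨v, hv⟩ := Ideal.span_singleton_eq_span_singleton.mp hsp
      have h5mem : (f : 𝓞 K) ^ 2 * p ∈ P ^ 5 := by
        have h1 : (f : 𝓞 K) ^ 2 ∈ P ^ 4 := by
          rw [hP4]; exact Ideal.mem_span_singleton_self _
        have h2 : (f : 𝓞 K) ^ 2 * p ∈ P ^ 4 * P := Ideal.mul_mem_mul h1 hpP
        rwa [← pow_succ] at h2
      have hmemT : (f : 𝓞 K) ^ 2 * p ∈
          Subtype.val '' ((Ideal.span {t} : Ideal O) : Set O) := h5.subset h5mem
      rw [memT] at hmemT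
      obtain ⟨c, hc⟩ := hmemT
      have htv : (t : 𝓞 K) = (f : 𝓞 K) ^ 2 * (↑v⁻¹ : 𝓞 K) := by
        rw [← hv, mul_assoc, v.mul_inv, mul_one]
      have hp_eq : p = (↑v⁻¹ : 𝓞 K) * c :=
        mul_left_cancel₀ (pow_ne_zero 2 hf0) (by rw [hc, htv]; ring)
      obtain ⟨n, hn⟩ := (hO ↑c).mp c.2
      have hcP : (c : 𝓞 K) ∈ P := by
        have : (c : 𝓞 K) = (v : 𝓞 K) * p := by
          rw [hp_eq, ← mul_assoc, v.mul_inv, one_mul]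
        rw [this]
        exact P.mul_mem_left _ hpP
      have hnP : ((n : ℤ) : 𝓞 K) ∈ P := by
        have h1 : (c : 𝓞 K) - n ∈ P := by
          rw [hram] at hn; exact P.pow_le_self two_ne_zero hn
        have h2 : ((n : ℤ) : 𝓞 K) = (c : 𝓞 K) - ((c : 𝓞 K) - n) := by ring
        rw [h2]; exact P.sub_mem hcP h1
      have hcf : (c : 𝓞 K) ∈ Ideal.span {(f : 𝓞 K)} := L2 _ c.2 hcP
      apply hpP2
      rw [← hram, hp_eq]
      exact Ideal.mul_mem_left _ _ hcf
    have hk5' : k ≠ 5 := fun h => hne5 (by rw [hkeq, h])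
    have : k = 3 := by omega
    rw [hkeq, this]
  -- useful : P ^ 4 = span {f ^ 2}
  have hP4 : (P : Ideal (𝓞 K)) ^ 4 = Ideal.span {(f : 𝓞 K) ^ 2} := by
    rw [show (4 : ℕ) = 2 * 2 from rfl, pow_mul, ← hram, Ideal.span_singleton_pow]
  have hP0 : P ≠ (0 : Ideal (𝓞 K)) := by simpa [Ideal.zero_eq_bot] using hPbot
  constructor
  · -- first part
    constructor
    · rintro ⟨t, _, h5, h3⟩
      have ht3 := lemB t ⟨h5, h3⟩
      have hspan0 : Ideal.span {(t : 𝓞 K)} ≠ (0 : Ideal (𝓞 K)) := by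
        rw [ht3]; exact pow_ne_zero _ hP0
      have h4 : P * Ideal.span {(t : 𝓞 K)} = Ideal.span {(f : 𝓞 K) ^ 2} := by
        rw [ht3, ← pow_succ', hP4]
      have hf2 : (f : 𝓞 K) ^ 2 ∈ Ideal.span {(t : 𝓞 K)} := by
        apply Ideal.mul_le_right (I := P)
        rw [h4]
        exact Ideal.mem_span_singleton_self _
      obtain ⟨β, hβ⟩ := Ideal.mem_span_singleton.mp hf2
      have hmul : Ideal.span {(t : 𝓞 K)} * P =
          Ideal.span {(t : 𝓞 K)} * Ideal.span {β} := by
        rw [mul_comm, h4, Ideal.span_singleton_mul_span_singleton, ← hβ]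
      exact ⟨⟨β, mul_left_cancel₀ hspan0 hmul⟩⟩
    · rintro ⟨⟨β, hβ₀⟩⟩
      have hβ : P = Ideal.span {β} := hβ₀
      have hβ0 : β ≠ 0 := by
        rintro rfl
        exact hPbot (hβ.trans (Ideal.span_singleton_eq_bot.mpr rfl))
      obtain ⟨u, hu⟩ : Associated ((f : 𝓞 K)) (β ^ 2) :=
        Ideal.span_singleton_eq_span_singleton.mp
          (by rw [hram, hβ, Ideal.span_singleton_pow])
      have htO : (f : 𝓞 K) * β ∈ O := by
        refine (hO _).mpr ⟨0, ?_⟩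
        rw [Int.cast_zero, sub_zero]
        exact Ideal.mem_span_singleton.2 ⟨β, rfl⟩
      set t : O := ⟨(f : 𝓞 K) * β, htO⟩ with ht_def
      have hcont := lemA β hβ t rfl
      have hspan3 : Ideal.span {(t : 𝓞 K)} = P ^ 3 := lemB t hcont
      -- F is a maximal ideal of O
      have hFmax : F.IsMaximal := by
        rw [Ideal.isMaximal_iff]
        constructor
        · intro h1F
          have h1 : ((1 : O) : 𝓞 K) ∈ Ideal.span {(f : 𝓞 K)} := (hF 1).mp h1F
          have h2 : (1 : 𝓞 K) ∈ Ideal.span {(f : 𝓞 K)} := by simpa using h1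
          have h3 : IsUnit (f : 𝓞 K) := isUnit_of_dvd_one (Ideal.mem_span_singleton.mp h2)
          apply hPtop
          rw [Ideal.eq_top_iff_one]
          apply P.pow_le_self two_ne_zero
          rw [← hram, Ideal.span_singleton_eq_top.mpr h3]
          trivial
        · intro J x hFJ hxF hxJ
          obtain ⟨n, hn⟩ := (hO ↑x).mp x.2
          have hfn : ¬ ((f : ℤ) ∣ n) := by
            intro hdvd
            apply hxF
            rw [hF]
            obtain ⟨m, rfl⟩ := hdvd
            have h1 : ((((f : ℤ) * m : ℤ)) : 𝓞 K) ∈ Ideal.span {(f : 𝓞 K)} :=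
              Ideal.mem_span_singleton.2 ⟨(m : 𝓞 K), by push_cast; ring⟩
            have h2 : ((x : 𝓞 K)) = ((x : 𝓞 K) - (((f : ℤ) * m : ℤ) : 𝓞 K)) +
                (((f : ℤ) * m : ℤ) : 𝓞 K) := by ring
            rw [h2]
            exact add_mem hn h1
          have hcop : IsCoprime ((f : ℕ) : ℤ) n :=
            ((Nat.prime_iff_prime_int.mp hf).coprime_iff_not_dvd).mpr hfn
          obtain ⟨a, b, hab⟩ := hcop
          have hyF : ((a : O) * (f : O) + (b : O) * ((n : O) - x)) ∈ F := by
            rw [hF]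
            push_cast
            apply add_mem
            · exact Ideal.mem_span_singleton.2 ⟨(a : 𝓞 K), mul_comm _ _⟩
            · apply Ideal.mul_mem_left
              have h1 : ((n : ℤ) : 𝓞 K) - (x : 𝓞 K) = -((x : 𝓞 K) - n) := by ring
              rw [h1]
              exact neg_mem hn
          have hcast : ((a * (f : ℤ) + b * n : ℤ) : O) = 1 := by rw [hab]; exact Int.cast_one
          have he : (1 : O) = ((a : O) * (f : O) + (b : O) * ((n : O) - x)) + (b : O) * x := by
            rw [← hcast]; push_cast; ring
          rw [he]
          exact J.add_mem (hFJ hyF) (J.mul_mem_left _ hxJ)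
      -- the radical of span {t} is F
      have hrad : (Ideal.span {t} : Ideal O).radical = F := by
        apply le_antisymm
        · intro x hx
          obtain ⟨k, hk⟩ := hx
          rw [hF]
          apply L2 _ x.2
          apply hP.mem_of_pow_mem k
          have h1 : ((x : 𝓞 K)) ^ k ∈ Ideal.span {(t : 𝓞 K)} := by
            obtain ⟨c, hc⟩ := Ideal.mem_span_singleton.mp hk
            refine Ideal.mem_span_singleton.2 ⟨c, ?_⟩
            have h2 := congrArg (Subtype.val : O → 𝓞 K) hc
            push_cast at h2
            exact h2
          rw [hspan3] at h1
          exact P.pow_le_self three_ne_zero h1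
        · intro x hxF
          obtain ⟨d, hd⟩ := Ideal.mem_span_singleton.mp ((hF x).mp hxF)
          have hcO : (f : 𝓞 K) * (β * (↑u⁻¹ : 𝓞 K) * d ^ 3) ∈ O := by
            refine (hO _).mpr ⟨0, ?_⟩
            rw [Int.cast_zero, sub_zero]
            exact Ideal.mem_span_singleton.2 ⟨β * (↑u⁻¹ : 𝓞 K) * d ^ 3, rfl⟩
          refine ⟨3, Ideal.mem_span_singleton.2 ⟨⟨_, hcO⟩, ?_⟩⟩
          apply Subtype.ext
          push_cast
          show (x : 𝓞 K) ^ 3 = ((f : 𝓞 K) * β) * ((f : 𝓞 K) * (β * (↑u⁻¹ : 𝓞 K) * d ^ 3))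
          have huu : (u : 𝓞 K) * (↑u⁻¹ : 𝓞 K) = 1 := u.mul_inv
          rw [hd]
          linear_combination ((f : 𝓞 K) ^ 2 * d ^ 3 * (↑u⁻¹ : 𝓞 K)) * hu -
            ((f : 𝓞 K) ^ 3 * d ^ 3) * huu
      refine ⟨t, ⟨⟨?_, hrad⟩, ?_⟩, hcont.1, hcont.2⟩
      · -- primary
        exact Ideal.isPrimary_of_isMaximal_radical (by rw [hrad]; exact hFmax)
      · -- not contained in F ^ 2
        intro hle
        have htF2 : t ∈ F ^ 2 := hle (Ideal.mem_span_singleton_self t)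
        have hF2 : ∀ z : O, z ∈ F ^ 2 → (z : 𝓞 K) ∈ Ideal.span {(f : 𝓞 K) ^ 2} := by
          intro z hz
          have hcomap : F ^ 2 ≤ Ideal.comap O.subtype (Ideal.span {(f : 𝓞 K) ^ 2}) := by
            rw [pow_two]
            apply Ideal.mul_le.mpr
            intro r hr s hs
            rw [Ideal.mem_comap]
            obtain ⟨r', hr'⟩ := Ideal.mem_span_singleton.mp ((hF r).mp hr)
            obtain ⟨s', hs'⟩ := Ideal.mem_span_singleton.mp ((hF s).mp hs)
            refine Ideal.mem_span_singleton.2 ⟨r' * s', ?_⟩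
            show ((r * s : O) : 𝓞 K) = (f : 𝓞 K) ^ 2 * (r' * s')
            push_cast
            rw [hr', hs']; ring
          exact hcomap hz
        obtain ⟨e, he⟩ := Ideal.mem_span_singleton.mp (hF2 t htF2)
        have hβe : β = (f : 𝓞 K) * e := by
          apply mul_left_cancel₀ hf0
          have h1 : ((t : 𝓞 K)) = (f : 𝓞 K) * β := rfl
          rw [← h1, he]; ring
        have hβP2 : β ∈ Ideal.span {β ^ 2} := by
          rw [← Ideal.span_singleton_pow, ← hβ, ← hram]
          exact Ideal.mem_span_singleton.2 ⟨e, hβe⟩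
        obtain ⟨s, hs⟩ := Ideal.mem_span_singleton.mp hβP2
        have hone : (1 : 𝓞 K) = β * s := by
          apply mul_left_cancel₀ hβ0
          rw [mul_one]
          nth_rewrite 1 [hs]
          ring
        apply hPtop
        rw [hβ]
        exact Ideal.span_singleton_eq_top.mpr (IsUnit.of_mul_eq_one _ hone.symm)
  · -- second part
    intro β hβ t
    constructor
    · intro hpair
      have hspan := lemB t hpair
      rw [hβ, Ideal.span_singleton_pow] at hspan
      obtain ⟨v, hv⟩ := Ideal.span_singleton_eq_span_singleton.mp hspan
      obtain ⟨u, hu⟩ : Associated ((f : 𝓞 K)) (β ^ 2) :=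
        Ideal.span_singleton_eq_span_singleton.mp
          (by rw [hram, hβ, Ideal.span_singleton_pow])
      refine ⟨u * v⁻¹, ?_⟩
      have h1 : (t : 𝓞 K) = β ^ 3 * (↑v⁻¹ : 𝓞 K) := by
        rw [← hv, mul_assoc, v.mul_inv, mul_one]
      rw [h1, Units.val_mul]
      linear_combination (-(β * (↑v⁻¹ : 𝓞 K))) * hu
    · rintro ⟨w, hw⟩
      have hβ' : P = Ideal.span {β * (w : 𝓞 K)} := by
        rw [hβ]
        exact Ideal.span_singleton_eq_span_singleton.mpr ⟨w, rfl⟩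
      exact lemA (β * (w : 𝓞 K)) hβ' t (by rw [hw]; ring)
end
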